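/- arXiv:2310.19370 — 11 statements merged into one kernel-verified Lean document; each statement's English description precedes it below -/
import Mathlib

section
/- Let G be a finite group, α an involutory automorphism of G, and S a generalized Cayley subset of G (i.e., S ∩ ω_α(G) = ∅ and α(S⁻¹) = S). If |S| is odd, then S ∩ Ω_α(G) ≠ ∅, where Ω_α(G) = {g ∈ G \ ω_α(G) : α(g) = g⁻¹}. -/
theorem stmt_1 {G : Type*} [Group G] [Finite G] (α : G ≃* G)
    (hinv : ∀ g : G, α (α g) = g) (S : Finset G)
    (hS1 : ↑S ∩ {x : G | ∃ g : G, x = α g⁻¹ * g} = ∅)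
    (hS2 : (fun s => α s⁻¹) '' ↑S = ↑S)
    (hodd : Odd S.card) :
    ∃ s ∈ S, s ∉ {x : G | ∃ g : G, x = α g⁻¹ * g} ∧ α s = s⁻¹ := by
  classical
  have hmem : ∀ s ∈ S, α s⁻¹ ∈ S := by
    intro s hs
    have : α s⁻¹ ∈ ((fun s => α s⁻¹) '' ↑S : Set G) := ⟨s, hs, rfl⟩
    rw [hS2] at this
    exact this
  let f : Function.End ↥(S : Finset G) := fun x => ⟨α (x : G)⁻¹, hmem x x.2⟩
  have hf : f ^ 2 ^ 1 = 1 := by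
    funext x
    simp only [pow_succ, pow_zero, one_mul]
    ext
    show α (α (x : G)⁻¹)⁻¹ = (x : G)
    rw [map_inv, hinv, inv_inv]
  have hcard : Fintype.card ↥S ≡ Fintype.card f.fixedPoints [MOD 2] :=
    Equiv.Perm.card_fixedPoints_modEq (p := 2) (n := 1) hf
  have hodd' : Odd (Fintype.card f.fixedPoints) := by
    have : Odd (Fintype.card ↥S) := by rwa [Fintype.card_coe]
    rcases Nat.even_or_odd (Fintype.card f.fixedPoints) with he | ho
    · exfalso
      rw [Nat.odd_iff] at this
      rw [Nat.even_iff] at he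
      rw [Nat.ModEq] at hcard
      omega
    · exact ho
  have hne : Nonempty f.fixedPoints := by
    rcases hodd' with ⟨k, hk⟩
    have : 0 < Fintype.card f.fixedPoints := by omega
    exact Fintype.card_pos_iff.mp this
  obtain ⟨⟨x, hx⟩⟩ := hne
  have hfx : α (x : G)⁻¹ = (x : G) := congrArg Subtype.val hx
  refine ⟨x, x.2, ?_, ?_⟩
  · intro hxω
    have : (x : G) ∈ (↑S ∩ {x : G | ∃ g : G, x = α g⁻¹ * g} : Set G) := ⟨x.2, hxω⟩
    rw [hS1] at this
    exact this
  · have := congrArg α hfx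
    rw [hinv] at this
    exact this.symm
end

section
/- Let G be a finite abelian group, α an involutory automorphism of G, and Γ = GC(G,S,α) the generalized Cayley graph with vertex set G and edges {g,h} whenever α(g⁻¹)h ∈ S. Then a right translation R(h): x ↦ xh is a graph automorphism of Γ if and only if ω_α(h)S = S, where ω_α(h) = α(h⁻¹)h. That is, R(G) ∩ Aut(Γ) = R(G_α(S)) where G_α(S) = {g ∈ G : ω_α(g)S = S}. -/
theorem stmt_2 {G : Type*} [CommGroup G] [Finite G] (α : G ≃* G)
    (hinv : ∀ g : G, α (α g) = g) (S : Set G)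
    (hS1 : S ∩ {x : G | ∃ g : G, x = α g⁻¹ * g} = ∅)
    (hS2 : (fun s => α s⁻¹) '' S = S)
    (Γ : SimpleGraph G) (hΓ : ∀ x y : G, Γ.Adj x y ↔ α x⁻¹ * y ∈ S)
    (h : G) :
    (∀ x y : G, Γ.Adj x y ↔ Γ.Adj (x * h) (y * h)) ↔
      (fun s => (α h⁻¹ * h) * s) '' S = S := by
  set ω : G := α h⁻¹ * h with hω
  have hkey : ∀ x y : G, α (x * h)⁻¹ * (y * h) = ω * (α x⁻¹ * y) := by
    intro x y
    simp only [hω, mul_inv_rev, map_mul]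
    rw [map_inv, map_inv]
    simp [mul_comm, mul_assoc, mul_left_comm]
  constructor
  · intro H
    have key : ∀ s : G, s ∈ S ↔ ω * s ∈ S := by
      intro s
      have := H 1 s
      rw [hΓ, hΓ, hkey] at this
      simpa using this
    ext s
    simp only [Set.mem_image]
    constructor
    · rintro ⟨t, ht, rfl⟩
      exact (key t).mp ht
    · intro hs
      refine ⟨ω⁻¹ * s, (key _).mpr ?_, by group⟩
      simpa using hs
  · intro hIm
    have key : ∀ s : G, s ∈ S ↔ ω * s ∈ S := by
      intro s
      constructor
      · intro hs
        rw [← hIm]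
        exact ⟨s, hs, rfl⟩
      · intro hs
        rw [← hIm] at hs
        obtain ⟨t, ht, het⟩ := hs
        have : t = s := by
          have := mul_left_cancel het
          exact this
        rwa [← this]
    intro x y
    rw [hΓ, hΓ, hkey]
    exact key _
end

section
/- Let G be a finite abelian group, α an involutory automorphism of G, and S a generalized Cayley subset. The generalized Cayley graph GC(G,S,α) is not bipartite if and only if there exist non-negative integers k_s for each s ∈ S such that Σ_{s∈S} k_s is odd and Π_{s∈S} s^{k_s} ∈ ω_α(G). -/
theorem stmt_7 {G : Type*} [CommGroup G] [Finite G] (α : G ≃* G)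
    (hinv : ∀ g : G, α (α g) = g) (S : Finset G)
    (hS1 : ↑S ∩ {x : G | ∃ g : G, x = α g⁻¹ * g} = ∅)
    (hS2 : (fun s => α s⁻¹) '' ↑S = ↑S)
    (Γ : SimpleGraph G) (hΓ : ∀ x y : G, Γ.Adj x y ↔ α x⁻¹ * y ∈ S) :
    ¬ Γ.Colorable 2 ↔
      ∃ k : G → ℕ, Odd (∑ s ∈ S, k s) ∧
        (∏ s ∈ S, s ^ k s) ∈ {x : G | ∃ g : G, x = α g⁻¹ * g} := by
  classical
  set W : Set G := {x : G | ∃ g : G, x = α g⁻¹ * g} with hWdef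
  have w_elem : ∀ x ∈ W, ∃ g : G, x = α g⁻¹ * g := fun x hx => hx
  have w_one : (1:G) ∈ W := ⟨1, by simp⟩
  have w_mul : ∀ x ∈ W, ∀ y ∈ W, x * y ∈ W := by
    rintro x ⟨g, rfl⟩ y ⟨g', rfl⟩
    refine ⟨g * g', ?_⟩
    rw [mul_inv, map_mul]
    simp [mul_comm, mul_left_comm, mul_assoc]
  have w_inv : ∀ x ∈ W, x⁻¹ ∈ W := by
    rintro x ⟨g, rfl⟩
    refine ⟨α g, ?_⟩
    simp [map_inv, hinv, mul_inv, mul_comm]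
  have w_map : ∀ x ∈ W, α x ∈ W := by
    rintro x ⟨g, rfl⟩
    exact ⟨α g, by simp [map_mul, map_inv, hinv]⟩
  have w_alpha : ∀ z : G, z⁻¹ * α z ∈ W := by
    intro z
    exact ⟨z⁻¹, by simp [map_inv, mul_comm]⟩
  have w_pow : ∀ x ∈ W, ∀ n : ℕ, x ^ n ∈ W := by
    intro x hx n
    induction n with
    | zero => simpa using w_one
    | succ m ih => rw [pow_succ]; exact w_mul _ ih _ hx
  have prodW : ∀ (f : G → G), (∀ i ∈ S, f i ∈ W) → ∏ i ∈ S, f i ∈ W := by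
    intro f hf
    exact Finset.prod_induction f (· ∈ W) (fun a b ha hb => w_mul a ha b hb) w_one hf
  set e : G → G := fun t => α t⁻¹ with he_def
  have he : ∀ t, e (e t) = t := by
    intro t; simp [he_def, map_inv, hinv]
  have heS : ∀ s ∈ S, e s ∈ S := by
    intro s hs
    have : e s ∈ (fun s => α s⁻¹) '' (↑S : Set G) := ⟨s, hs, rfl⟩
    rw [hS2] at this; exact this
  have invProd : ∀ k : G → ℕ, ∃ k' : G → ℕ, (∑ s ∈ S, k' s = ∑ s ∈ S, k s) ∧
      ∃ w ∈ W, (∏ s ∈ S, s ^ k s)⁻¹ = (∏ s ∈ S, s ^ k' s) * w := by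
    intro k
    refine ⟨fun t => k (e t), ?_, ?_⟩
    · exact Finset.sum_nbij' e e (fun a ha => heS a ha) (fun a ha => heS a ha)
        (fun a _ => he a) (fun a _ => he a) (fun a _ => rfl)
    · refine ⟨∏ s ∈ S, (s⁻¹ * α s) ^ k s, prodW _ (fun i hi => w_pow _ (w_alpha i) _), ?_⟩
      have h1 : (∏ s ∈ S, s ^ k s)⁻¹ = ∏ s ∈ S, ((e s) * (s⁻¹ * α s)) ^ k s := by
        rw [← Finset.prod_inv_distrib]
        refine Finset.prod_congr rfl (fun t _ => ?_)
        rw [← inv_pow]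
        congr 1
        rw [he_def]
        simp [map_inv, mul_comm, mul_left_comm, mul_assoc]
      have h2 : ∏ s ∈ S, (e s) ^ k s = ∏ t ∈ S, t ^ (fun t => k (e t)) t := by
        refine (Finset.prod_nbij' e e (fun a ha => heS a ha) (fun a ha => heS a ha)
          (fun a _ => he a) (fun a _ => he a) (fun a _ => ?_)).symm
        simp [he a]
      rw [h1]
      simp only [mul_pow, Finset.prod_mul_distrib]
      rw [h2]
  have P_add : ∀ k k' : G → ℕ, (∏ s ∈ S, s ^ (k s + k' s)) =
      (∏ s ∈ S, s ^ k s) * ∏ s ∈ S, s ^ k' s := by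
    intro k k'
    simp [pow_add, Finset.prod_mul_distrib]
  constructor
  · -- if not 2-colorable, there is an odd combination in W
    intro hnc
    by_contra hno
    apply hnc
    -- construct a 2-coloring
    have noBoth : ∀ z : G,
        (∃ k : G → ℕ, Odd (∑ s ∈ S, k s) ∧ ∃ w ∈ W, z = (∏ s ∈ S, s ^ k s) * w) →
        (∃ k : G → ℕ, Even (∑ s ∈ S, k s) ∧ ∃ w ∈ W, z = (∏ s ∈ S, s ^ k s) * w) →
        False := by
      rintro z ⟨k, hk, w, hw, rfl⟩ ⟨k', hk', w', hw', heq⟩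
      obtain ⟨k'', hsum, w'', hw'', hin⟩ := invProd k'
      apply hno
      refine ⟨fun t => k t + k'' t, ?_, ?_⟩
      · rw [Finset.sum_add_distrib, hsum]
        exact hk.add_even hk'
      · rw [P_add]
        have h1 : (∏ s ∈ S, s ^ k s) = (∏ s ∈ S, s ^ k' s) * w' * w⁻¹ :=
          eq_mul_inv_of_mul_eq heq
        have h2 : (∏ s ∈ S, s ^ k'' s) = (∏ s ∈ S, s ^ k' s)⁻¹ * w''⁻¹ :=
          eq_mul_inv_of_mul_eq hin.symm
        rw [h1, h2]
        have hexp : (∏ s ∈ S, s ^ k' s) * w' * w⁻¹ * ((∏ s ∈ S, s ^ k' s)⁻¹ * w''⁻¹)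
            = w' * (w⁻¹ * w''⁻¹) := by
          simp [mul_comm, mul_left_comm, mul_assoc]
        rw [hexp]
        exact w_mul _ hw' _ (w_mul _ (w_inv _ hw) _ (w_inv _ hw''))
    -- the subgroup H
    obtain ⟨H, memH⟩ : ∃ H : Subgroup G, ∀ a : G,
        a ∈ H ↔ ∃ k : G → ℕ, ∃ w ∈ W, a = (∏ s ∈ S, s ^ k s) * w := by
      refine ⟨{ carrier := ({x : G | ∃ k : G → ℕ, ∃ w ∈ W, x = (∏ s ∈ S, s ^ k s) * w} : Set G), one_mem' := ⟨0, 1, w_one, by simp⟩, mul_mem' := ?_, inv_mem' := ?_ }, fun a => Iff.rfl⟩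
      · rintro a b ⟨k, w, hw, rfl⟩ ⟨k', w', hw', rfl⟩
        refine ⟨fun t => k t + k' t, w * w', w_mul _ hw _ hw', ?_⟩
        rw [P_add]
        simp [mul_comm, mul_left_comm, mul_assoc]
      · rintro a ⟨k, w, hw, rfl⟩
        obtain ⟨k', _, w'', hw'', hin⟩ := invProd k
        refine ⟨k', w'' * w⁻¹, w_mul _ hw'' _ (w_inv _ hw), ?_⟩
        rw [mul_inv, hin]
        simp [mul_comm, mul_left_comm, mul_assoc]
    set rep : G → G := fun x => (QuotientGroup.mk x : G ⧸ H).out with hrep_def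
    have hrepH : ∀ x : G, (rep x)⁻¹ * x ∈ H := by
      intro x
      have : (QuotientGroup.mk (rep x) : G ⧸ H) = QuotientGroup.mk x := by
        rw [hrep_def]
        exact Quotient.out_eq _
      exact QuotientGroup.eq.mp this
    set c : G → ZMod 2 := fun x =>
      if (∃ k : G → ℕ, Odd (∑ s ∈ S, k s) ∧ ∃ w ∈ W, (rep x)⁻¹ * x = (∏ s ∈ S, s ^ k s) * w)
      then 1 else 0 with hc_def
    have edge : ∀ x y : G, Γ.Adj x y → c x ≠ c y := by
      intro x y hxy
      have hs : α x⁻¹ * y ∈ S := (hΓ x y).mp hxy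
      set s := α x⁻¹ * y with hs_def
      have hy : y = α x * s := by rw [hs_def, map_inv]; group
      have hPs : (∏ t ∈ S, t ^ (if t = s then 1 else 0)) = s := by
        have : ∀ t ∈ S, t ^ (if t = s then 1 else 0) = (if t = s then t else 1) := by
          intro t _; split <;> simp
        rw [Finset.prod_congr rfl this, Finset.prod_ite_eq' S s (fun t => t), if_pos hs]
      have hxyH : x⁻¹ * y ∈ H := by
        rw [memH]
        refine ⟨fun t => if t = s then 1 else 0, x⁻¹ * α x, w_alpha x, ?_⟩
        rw [hPs, hy]
        simp [mul_comm, mul_left_comm, mul_assoc]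
      have hq : (QuotientGroup.mk x : G ⧸ H) = QuotientGroup.mk y := QuotientGroup.eq.mpr hxyH
      have hrxy : rep y = rep x := by rw [hrep_def]; exact congrArg Quotient.out hq.symm
      obtain ⟨k, w, hw, hae⟩ := (memH _).mp (hrepH x)
      have hbrep : (rep x)⁻¹ * y = (∏ t ∈ S, t ^ (k t + if t = s then 1 else 0)) *
          (w * (x⁻¹ * α x)) := by
        have : (rep x)⁻¹ * y = ((rep x)⁻¹ * x) * (s * (x⁻¹ * α x)) := by
          rw [hy]; simp [mul_comm, mul_left_comm, mul_assoc]
        rw [this, hae, P_add, hPs]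
        simp [mul_comm, mul_left_comm, mul_assoc]
      have hsumb : ∑ t ∈ S, (k t + if t = s then 1 else 0) = (∑ t ∈ S, k t) + 1 := by
        rw [Finset.sum_add_distrib, Finset.sum_ite_eq' S s (fun _ => 1), if_pos hs]
      rcases Nat.even_or_odd (∑ t ∈ S, k t) with hev | hod
      · have hOb : ∃ kk : G → ℕ, Odd (∑ t ∈ S, kk t) ∧ ∃ w' ∈ W,
            (rep y)⁻¹ * y = (∏ t ∈ S, t ^ kk t) * w' := by
          refine ⟨fun t => k t + if t = s then 1 else 0, ?_, w * (x⁻¹ * α x),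
            w_mul _ hw _ (w_alpha x), ?_⟩
          · rw [hsumb]; exact hev.add_one
          · rw [hrxy]; exact hbrep
        have hOa : ¬ (∃ kk : G → ℕ, Odd (∑ t ∈ S, kk t) ∧ ∃ w' ∈ W,
            (rep x)⁻¹ * x = (∏ t ∈ S, t ^ kk t) * w') := by
          intro hOa
          exact noBoth _ hOa ⟨k, hev, w, hw, hae⟩
        have hcx : c x = 0 := by simp only [hc_def, if_neg hOa]
        have hcy : c y = 1 := by simp only [hc_def, if_pos hOb]
        rw [hcx, hcy]; exact zero_ne_one
      · have hOa : ∃ kk : G → ℕ, Odd (∑ t ∈ S, kk t) ∧ ∃ w' ∈ W,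
            (rep x)⁻¹ * x = (∏ t ∈ S, t ^ kk t) * w' := ⟨k, hod, w, hw, hae⟩
        have hOb : ¬ (∃ kk : G → ℕ, Odd (∑ t ∈ S, kk t) ∧ ∃ w' ∈ W,
            (rep y)⁻¹ * y = (∏ t ∈ S, t ^ kk t) * w') := by
          intro hOb
          refine noBoth ((rep y)⁻¹ * y) hOb ⟨fun t => k t + if t = s then 1 else 0, ?_,
            w * (x⁻¹ * α x), w_mul _ hw _ (w_alpha x), ?_⟩
          · rw [hsumb]; exact hod.add_one
          · rw [hrxy]; exact hbrep
        have hcx : c x = 1 := by simp only [hc_def, if_pos hOa]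
        have hcy : c y = 0 := by simp only [hc_def, if_neg hOb]
        rw [hcx, hcy]; exact one_ne_zero
    have C : Γ.Coloring (ZMod 2) := SimpleGraph.Coloring.mk c (fun {x y} h => edge x y h)
    have := C.colorable
    simpa using this
  · -- if there is an odd combination in W, then not 2-colorable
    rintro ⟨k₀, hk₀odd, hk₀W⟩ hcol
    obtain ⟨C⟩ := hcol
    set c : G → ZMod 2 := fun v => if C v = 0 then 0 else 1 with hc_def
    have hcadj : ∀ {x y : G}, Γ.Adj x y → c y = c x + 1 := by
      intro x y h
      have hne : C x ≠ C y := C.valid h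
      have key : ∀ a b : Fin 2, a ≠ b →
          (if b = 0 then (0:ZMod 2) else 1) = (if a = 0 then (0:ZMod 2) else 1) + 1 := by decide
      simpa [hc_def] using key _ _ hne
    have key : ∀ n : ℕ, ∀ k : G → ℕ, (∑ s ∈ S, k s) = n → ∃ w ∈ W, ∀ x : G,
        c ((if Even n then x else α x) * ((∏ s ∈ S, s ^ k s) * w)) = c x + n := by
      intro n
      induction n with
      | zero =>
        intro k hk
        refine ⟨1, w_one, fun x => ?_⟩
        have hz : ∀ t ∈ S, k t = 0 := by
          intro t ht
          exact (Finset.sum_eq_zero_iff.mp hk) t ht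
        have hP : (∏ s ∈ S, s ^ k s) = 1 :=
          Finset.prod_eq_one (fun t ht => by rw [hz t ht, pow_zero])
        simp [hP]
      | succ n ih =>
        intro k hk
        have hne0 : (∑ s ∈ S, k s) ≠ 0 := by rw [hk]; exact Nat.succ_ne_zero n
        obtain ⟨s₀, hs₀S, hs₀⟩ := Finset.exists_ne_zero_of_sum_ne_zero hne0
        set k' : G → ℕ := fun t => if t = s₀ then k t - 1 else k t with hk'_def
        have hsum' : ∑ t ∈ S, k' t = n := by
          have h1 := Finset.add_sum_erase S k hs₀S
          have h2 := Finset.add_sum_erase S k' hs₀S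
          have h3 : ∑ t ∈ S.erase s₀, k' t = ∑ t ∈ S.erase s₀, k t :=
            Finset.sum_congr rfl (fun t ht => by
              simp [hk'_def, Finset.ne_of_mem_erase ht])
          have h4 : k' s₀ = k s₀ - 1 := by simp [hk'_def]
          omega
        have hPk : (∏ t ∈ S, t ^ k t) = (∏ t ∈ S, t ^ k' t) * s₀ := by
          rw [← Finset.mul_prod_erase S (fun t => t ^ k t) hs₀S,
              ← Finset.mul_prod_erase S (fun t => t ^ k' t) hs₀S]
          have h3 : ∏ t ∈ S.erase s₀, t ^ k' t = ∏ t ∈ S.erase s₀, t ^ k t :=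
            Finset.prod_congr rfl (fun t ht => by
              simp [hk'_def, Finset.ne_of_mem_erase ht])
          have h5 : s₀ ^ k s₀ = s₀ ^ k' s₀ * s₀ := by
            have h4 : k' s₀ = k s₀ - 1 := by simp [hk'_def]
            rw [h4, ← pow_succ]
            congr 1
            omega
          rw [h3, h5]
          simp [mul_comm, mul_left_comm, mul_assoc]
        obtain ⟨w', hw', hcy'⟩ := ih k' hsum'
        set u : G := ((∏ t ∈ S, t ^ k' t))⁻¹ * α (∏ t ∈ S, t ^ k' t) with hu_def
        have huW : u ∈ W := w_alpha _
        refine ⟨u * α w', w_mul _ huW _ (w_map _ hw'), fun x => ?_⟩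
        set y' := (if Even n then x else α x) * ((∏ t ∈ S, t ^ k' t) * w') with hy'_def
        set y := α y' * s₀ with hy_def
        have hadj : Γ.Adj y' y := by
          rw [hΓ]
          rw [hy_def, map_inv]
          simpa using hs₀S
        have hcy : c y = c y' + 1 := hcadj hadj
        have hyexp : y = (if Even (n+1) then x else α x) *
            ((∏ t ∈ S, t ^ k t) * (u * α w')) := by
          rw [hy_def, hy'_def, hPk, hu_def]
          rcases Nat.even_or_odd n with hev | hodd
          · rw [if_pos hev, if_neg (by simpa [Nat.even_add_one] using hev)]
            rw [map_mul, map_mul]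
            simp [mul_comm, mul_left_comm, mul_assoc]
          · rw [if_neg (Nat.not_even_iff_odd.mpr hodd),
               if_pos (Nat.even_add_one.mpr (Nat.not_even_iff_odd.mpr hodd))]
            rw [map_mul, map_mul, hinv]
            simp [mul_comm, mul_left_comm, mul_assoc]
        rw [← hyexp, hcy, hcy' x]
        push_cast
        ring
    obtain ⟨w, hwW, hkey⟩ := key _ k₀ rfl
    obtain ⟨h₀, hh₀⟩ := w_elem _ (w_mul _ hk₀W _ hwW)
    have hkey' := hkey h₀
    rw [if_neg (Nat.not_even_iff_odd.mpr hk₀odd)] at hkey'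
    have hfix : α h₀ * ((∏ s ∈ S, s ^ k₀ s) * w) = h₀ := by
      rw [hh₀, map_inv]
      group
    rw [hfix] at hkey'
    have hcast : ((∑ s ∈ S, k₀ s : ℕ) : ZMod 2) = 1 := by
      obtain ⟨m, hm⟩ := hk₀odd
      rw [hm]
      push_cast
      rw [show ((2:ZMod 2)) = 0 by decide]
      ring
    rw [hcast] at hkey'
    simpa using hkey'
end

section
/- Let G be a finite group, α an involutory automorphism of G, and S a generalized Cayley subset. Then {x,y} is an edge of the Cayley graph Cay(G, S⁻¹S) if and only if there exists a walk of length 2 from x to y in GC(G,S,α). -/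
theorem walk_len_two {G : Type*} {Γ : SimpleGraph G} {x y : G}
    (w : Γ.Walk x y) (hw : w.length = 2) :
    ∃ z, Γ.Adj x z ∧ Γ.Adj z y := by
  match w, hw with
  | .cons h1 (.cons h2 .nil), _ => exact ⟨_, h1, h2⟩

theorem stmt_9 {G : Type*} [Group G] [Finite G] (α : G ≃* G)
    (hinv : ∀ g : G, α (α g) = g) (S : Set G)
    (hS1 : S ∩ {x : G | ∃ g : G, x = α g⁻¹ * g} = ∅)
    (hS2 : (fun s => α s⁻¹) '' S = S)
    (Γ : SimpleGraph G) (hΓ : ∀ x y : G, Γ.Adj x y ↔ α x⁻¹ * y ∈ S)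
    (x y : G) :
    (x⁻¹ * y ∈ {u : G | ∃ s ∈ S, ∃ t ∈ S, u = s⁻¹ * t}) ↔
      ∃ w : Γ.Walk x y, w.length = 2 := by
  have hmem : ∀ s ∈ S, α s⁻¹ ∈ S := by
    intro s hs
    rw [← hS2]
    exact ⟨s, hs, rfl⟩
  constructor
  · rintro ⟨s, hs, t, ht, h⟩
    set z := α x * α s⁻¹ with hz
    have h1 : Γ.Adj x z := by
      rw [hΓ]
      have : α x⁻¹ * z = α s⁻¹ := by
        simp [hz, map_inv, mul_assoc]
      rw [this]; exact hmem s hs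
    have h2 : Γ.Adj z y := by
      rw [hΓ]
      have : α z⁻¹ * y = t := by
        rw [hz]
        simp only [mul_inv_rev, map_mul, map_inv, hinv, inv_inv]
        rw [mul_assoc, h]
        group
      rw [this]; exact ht
    exact ⟨.cons h1 (.cons h2 .nil), rfl⟩
  · rintro ⟨w, hw⟩
    obtain ⟨b, h1, h2⟩ := walk_len_two w hw
    rw [hΓ] at h1 h2
    refine ⟨α (α x⁻¹ * b)⁻¹, hmem _ h1, α b⁻¹ * y, h2, ?_⟩
    simp only [map_mul, map_inv, hinv, mul_inv_rev, inv_inv]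
    group
end

section
/- Let GC(G,S,α) be a generalized Cayley graph over a finite group G. If GC(G,S,α) is connected, then the set Θ of elements reachable from the identity e by a walk of even length equals the subgroup ⟨S⁻¹S⟩, and |⟨S⁻¹S⟩| ≥ |G|/2. -/
/-!
Along a path `y - z - z'` put `s = α z⁻¹ * y` and `t = α z⁻¹ * z'` (using the symmetry of `Γ`
for the first edge); then `y⁻¹ * z' = s⁻¹ * t`. So an even walk from `1` ends in `⟨S⁻¹S⟩`, and
conversely every `x * s⁻¹ * t` is two edges away from `x` through the vertex `z` with
`α z⁻¹ = s * x⁻¹`. Since `S⁻¹S` is closed under inversion, the even walks from `1` reach exactly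
`⟨S⁻¹S⟩`.

For the bound, `x ↦ α x * s` (for a fixed `s ∈ S`) is injective and moves every vertex along an
edge, so it sends the vertices reached by odd walks into those reached by even walks; by
connectedness these two sets cover `G`.
-/

open scoped Pointwise

namespace SimpleGraph

variable {V : Type*} {Γ : SimpleGraph V}

theorem Connected.card_le_two_mul_ncard_even_walk [Finite V] (hconn : Γ.Connected) (v : V)
    {f : V → V} (hf : f.Injective) (hadj : ∀ x, Γ.Adj x (f x)) :
    Nat.card V ≤ 2 * {x | ∃ w : Γ.Walk v x, Even w.length}.ncard := by
  set E := {x | ∃ w : Γ.Walk v x, Even w.length}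
  set O := {x | ∃ w : Γ.Walk v x, Odd w.length}
  have hcover : E ∪ O = Set.univ := Set.eq_univ_of_forall fun x => by
    obtain ⟨w⟩ := hconn.preconnected v x
    exact (Nat.even_or_odd w.length).imp (⟨w, ·⟩) (⟨w, ·⟩)
  have hOE : O.ncard ≤ E.ncard := by
    refine Set.ncard_le_ncard_of_injOn f ?_ hf.injOn (Set.toFinite _)
    rintro x ⟨w, hw⟩
    exact ⟨w.concat (hadj x), by simpa [Walk.length_concat] using hw.add_one⟩
  calc Nat.card V = (E ∪ O).ncard := by rw [hcover, Set.ncard_univ]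
    _ ≤ E.ncard + O.ncard := Set.ncard_union_le E O
    _ ≤ 2 * E.ncard := by omega

end SimpleGraph

open SimpleGraph

section GeneralizedCayley

variable {G : Type*} [Group G] {α : G ≃* G} {S : Set G} {Γ : SimpleGraph G}

theorem setOf_exists_inv_mul_eq :
    {u : G | ∃ s ∈ S, ∃ t ∈ S, u = s⁻¹ * t} = S⁻¹ * S := by
  ext u
  constructor
  · rintro ⟨s, hs, t, ht, rfl⟩
    exact ⟨s⁻¹, by simpa using hs, t, ht, rfl⟩
  · rintro ⟨a, ha, t, ht, rfl⟩
    exact ⟨a⁻¹, ha, t, ht, by rw [inv_inv]⟩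

theorem inv_mul_mem_of_adj_of_adj (hΓ : ∀ x y : G, Γ.Adj x y ↔ α x⁻¹ * y ∈ S)
    {y z z' : G} (h : Γ.Adj y z) (h' : Γ.Adj z z') : y⁻¹ * z' ∈ S⁻¹ * S :=
  ⟨(α z⁻¹ * y)⁻¹, Set.inv_mem_inv.2 ((hΓ z y).1 h.symm), α z⁻¹ * z', (hΓ z z').1 h', by group⟩

theorem exists_even_walk_mul_inv_mul (hΓ : ∀ x y : G, Γ.Adj x y ↔ α x⁻¹ * y ∈ S)
    {v x s t : G} (hs : s ∈ S) (ht : t ∈ S) (hx : ∃ w : Γ.Walk v x, Even w.length) :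
    ∃ w : Γ.Walk v (x * (s⁻¹ * t)), Even w.length := by
  obtain ⟨w, hw⟩ := hx
  set z := (α.symm (s * x⁻¹))⁻¹
  have hαz : α z⁻¹ = s * x⁻¹ := by simp [z]
  have h₁ : Γ.Adj x z := ((hΓ z x).2 (by rwa [hαz, inv_mul_cancel_right])).symm
  have h₂ : Γ.Adj z (x * (s⁻¹ * t)) := (hΓ _ _).2 (by rwa [hαz, mul_assoc, inv_mul_cancel_left,
    mul_inv_cancel_left])
  exact ⟨(w.concat h₁).concat h₂, by simpa [Walk.length_concat] using hw.add_one.add_one⟩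

theorem mem_closure_of_even_walk (hΓ : ∀ x y : G, Γ.Adj x y ↔ α x⁻¹ * y ∈ S) :
    ∀ {y x : G} (w : Γ.Walk y x), Even w.length → y⁻¹ * x ∈ Subgroup.closure (S⁻¹ * S)
  | _, _, .nil, _ => by simp
  | _, _, .cons _ .nil, hw => absurd hw (by simp)
  | y, x, .cons h (.cons (v := z') h' w), hw => by
    rw [show y⁻¹ * x = (y⁻¹ * z') * (z'⁻¹ * x) by group]
    refine mul_mem (Subgroup.subset_closure (inv_mul_mem_of_adj_of_adj hΓ h h'))
      (mem_closure_of_even_walk hΓ w ?_)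
    simpa [Nat.even_add_one] using hw

theorem exists_even_walk_mul_of_mem_closure (hΓ : ∀ x y : G, Γ.Adj x y ↔ α x⁻¹ * y ∈ S)
    {g : G} (hg : g ∈ Subgroup.closure (S⁻¹ * S)) {x : G}
    (hx : ∃ w : Γ.Walk 1 x, Even w.length) : ∃ w : Γ.Walk 1 (x * g), Even w.length := by
  induction hg using Subgroup.closure_induction'' generalizing x with
  | mem u hu =>
    obtain ⟨a, ha, t, ht, rfl⟩ := hu
    have := exists_even_walk_mul_inv_mul hΓ (Set.mem_inv.1 ha) ht hx
    rwa [inv_inv] at this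
  | inv_mem u hu =>
    obtain ⟨a, ha, t, ht, rfl⟩ := hu
    have := exists_even_walk_mul_inv_mul hΓ ht (Set.mem_inv.1 ha) hx
    rwa [← mul_inv_rev] at this
  | one => rwa [mul_one]
  | mul g h _ _ ihg ihh => rw [← mul_assoc]; exact ihh (ihg hx)

theorem setOf_even_walk_eq_closure (hΓ : ∀ x y : G, Γ.Adj x y ↔ α x⁻¹ * y ∈ S) :
    {x : G | ∃ w : Γ.Walk 1 x, Even w.length} = Subgroup.closure (S⁻¹ * S) := by
  ext x
  constructor
  · rintro ⟨w, hw⟩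
    simpa using mem_closure_of_even_walk hΓ w hw
  · intro hx
    have := exists_even_walk_mul_of_mem_closure hΓ hx ⟨.nil, Even.zero⟩
    rwa [one_mul] at this

theorem card_le_two_mul_card_closure [Finite G] (hΓ : ∀ x y : G, Γ.Adj x y ↔ α x⁻¹ * y ∈ S)
    (hconn : Γ.Connected) : Nat.card G ≤ 2 * Nat.card (Subgroup.closure (S⁻¹ * S)) := by
  rw [← SetLike.coe_sort_coe, ← setOf_even_walk_eq_closure hΓ, Nat.card_coe_set_eq]
  rcases S.eq_empty_or_nonempty with rfl | ⟨s, hs⟩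
  · have hbot : Γ = ⊥ := by ext x y; simp [hΓ]
    subst hbot
    obtain ⟨_, _⟩ := connected_bot_iff.1 hconn
    have : 0 < {x : G | ∃ w : (⊥ : SimpleGraph G).Walk 1 x, Even w.length}.ncard :=
      (Set.ncard_pos (Set.toFinite _)).2 ⟨1, .nil, Even.zero⟩
    rw [Nat.card_unique]
    omega
  · refine hconn.card_le_two_mul_ncard_even_walk 1 (f := fun x => α x * s)
      (fun a b hab => α.injective (mul_right_cancel hab)) fun x => ?_
    rwa [hΓ, map_inv, inv_mul_cancel_left]

end GeneralizedCayley

theorem stmt_10_general {G : Type*} [Group G] [Finite G] (α : G ≃* G)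
    (S : Set G)
    (Γ : SimpleGraph G) (hΓ : ∀ x y : G, Γ.Adj x y ↔ α x⁻¹ * y ∈ S)
    (hconn : Γ.Connected) :
    {x : G | ∃ w : Γ.Walk 1 x, Even w.length} =
        ↑(Subgroup.closure {u : G | ∃ s ∈ S, ∃ t ∈ S, u = s⁻¹ * t}) ∧
      Nat.card G ≤ 2 * Nat.card (Subgroup.closure {u : G | ∃ s ∈ S, ∃ t ∈ S, u = s⁻¹ * t}) := by
  rw [setOf_exists_inv_mul_eq]
  exact ⟨setOf_even_walk_eq_closure hΓ, card_le_two_mul_card_closure hΓ hconn⟩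

theorem stmt_10 {G : Type*} [Group G] [Finite G] (α : G ≃* G)
    (hinv : ∀ g : G, α (α g) = g) (S : Set G)
    (hS1 : S ∩ {x : G | ∃ g : G, x = α g⁻¹ * g} = ∅)
    (hS2 : (fun s => α s⁻¹) '' S = S)
    (Γ : SimpleGraph G) (hΓ : ∀ x y : G, Γ.Adj x y ↔ α x⁻¹ * y ∈ S)
    (hconn : Γ.Connected) :
    {x : G | ∃ w : Γ.Walk 1 x, Even w.length} =
        ↑(Subgroup.closure {u : G | ∃ s ∈ S, ∃ t ∈ S, u = s⁻¹ * t}) ∧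
      Nat.card G ≤ 2 * Nat.card (Subgroup.closure {u : G | ∃ s ∈ S, ∃ t ∈ S, u = s⁻¹ * t}) :=
  stmt_10_general α S Γ hΓ hconn
end

section
/- Let GC(G,S,α) be a generalized Cayley graph over a finite group G with S nonempty. Then the vertex set of the connected component containing the identity e equals ⟨S⁻¹S⟩ ∪ ⟨SS⁻¹⟩s for any s ∈ S. -/
theorem stmt_12 {G : Type*} [Group G] [Finite G] (α : G ≃* G)
    (hinv : ∀ g : G, α (α g) = g) (S : Set G) (hne : S.Nonempty)
    (hS1 : S ∩ {x : G | ∃ g : G, x = α g⁻¹ * g} = ∅)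
    (hS2 : (fun s => α s⁻¹) '' S = S)
    (Γ : SimpleGraph G) (hΓ : ∀ x y : G, Γ.Adj x y ↔ α x⁻¹ * y ∈ S) :
    ∀ s ∈ S,
      {x : G | Γ.Reachable 1 x} =
        ↑(Subgroup.closure {u : G | ∃ a ∈ S, ∃ b ∈ S, u = a⁻¹ * b}) ∪
          {x : G | ∃ h ∈ Subgroup.closure {u : G | ∃ a ∈ S, ∃ b ∈ S, u = a * b⁻¹}, x = h * s} := by
  intro s hs
  set T1 : Set G := {u : G | ∃ a ∈ S, ∃ b ∈ S, u = a⁻¹ * b} with hT1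
  set T2 : Set G := {u : G | ∃ a ∈ S, ∃ b ∈ S, u = a * b⁻¹} with hT2
  set H := Subgroup.closure T1 with hH
  set K := Subgroup.closure T2 with hK
  -- image of S under a ↦ α a⁻¹ is in S
  have hSm : ∀ a ∈ S, α a⁻¹ ∈ S := fun a ha => hS2 ▸ ⟨a, ha, rfl⟩
  -- α maps H into K
  have αHK : ∀ h ∈ H, α h ∈ K := by
    intro h hh
    induction hh using Subgroup.closure_induction with
    | mem x hx =>
      obtain ⟨a, ha, b, hb, rfl⟩ := hx
      refine Subgroup.subset_closure ⟨α a⁻¹, hSm a ha, α b⁻¹, hSm b hb, ?_⟩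
      simp [map_mul, map_inv]
    | one => rw [map_one]; exact Subgroup.one_mem K
    | mul x y hx hy ihx ihy => rw [map_mul]; exact mul_mem ihx ihy
    | inv x hx ihx => rw [map_inv]; exact inv_mem ihx
  -- conjugation sends K into H and H into K
  have conjKH : ∀ t ∈ S, ∀ k ∈ K, t⁻¹ * k * t ∈ H := by
    intro t ht k hk
    induction hk using Subgroup.closure_induction with
    | mem x hx =>
      obtain ⟨a, ha, b, hb, rfl⟩ := hx
      have h1 : t⁻¹ * a ∈ H := Subgroup.subset_closure ⟨t, ht, a, ha, rfl⟩
      have h2 : t⁻¹ * b ∈ H := Subgroup.subset_closure ⟨t, ht, b, hb, rfl⟩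
      have : t⁻¹ * (a * b⁻¹) * t = (t⁻¹ * a) * (t⁻¹ * b)⁻¹ := by group
      rw [this]
      exact mul_mem h1 (inv_mem h2)
    | one => simpa using Subgroup.one_mem H
    | mul x y hx hy ihx ihy =>
      have : t⁻¹ * (x * y) * t = (t⁻¹ * x * t) * (t⁻¹ * y * t) := by group
      rw [this]; exact mul_mem ihx ihy
    | inv x hx ihx =>
      have : t⁻¹ * x⁻¹ * t = (t⁻¹ * x * t)⁻¹ := by group
      rw [this]; exact inv_mem ihx
  have conjHK : ∀ t ∈ S, ∀ h ∈ H, t * h * t⁻¹ ∈ K := by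
    intro t ht h hh
    induction hh using Subgroup.closure_induction with
    | mem x hx =>
      obtain ⟨a, ha, b, hb, rfl⟩ := hx
      have h1 : t * a⁻¹ ∈ K := Subgroup.subset_closure ⟨t, ht, a, ha, rfl⟩
      have h2 : t * b⁻¹ ∈ K := Subgroup.subset_closure ⟨t, ht, b, hb, rfl⟩
      have : t * (a⁻¹ * b) * t⁻¹ = (t * a⁻¹) * (t * b⁻¹)⁻¹ := by group
      rw [this]
      exact mul_mem h1 (inv_mem h2)
    | one => simpa using Subgroup.one_mem K
    | mul x y hx hy ihx ihy =>
      have : t * (x * y) * t⁻¹ = (t * x * t⁻¹) * (t * y * t⁻¹) := by group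
      rw [this]; exact mul_mem ihx ihy
    | inv x hx ihx =>
      have : t * x⁻¹ * t⁻¹ = (t * x * t⁻¹)⁻¹ := by group
      rw [this]; exact inv_mem ihx
  -- moving along the graph: for y ∈ H, x is connected to x * y
  have move : ∀ y ∈ H, ∀ x : G, Γ.Reachable x (x * y) := by
    intro y hy
    induction hy using Subgroup.closure_induction with
    | mem u hu =>
      intro x
      obtain ⟨a, ha, b, hb, rfl⟩ := hu
      have e1 : Γ.Adj x (α x * α a⁻¹) := by
        rw [hΓ]
        have : α x⁻¹ * (α x * α a⁻¹) = α a⁻¹ := by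
          rw [map_inv]; group
        rw [this]; exact hSm a ha
      have e2 : Γ.Adj (α x * α a⁻¹) (x * (a⁻¹ * b)) := by
        rw [hΓ]
        have : α (α x * α a⁻¹)⁻¹ * (x * (a⁻¹ * b)) = b := by
          rw [map_inv, map_mul, hinv, hinv]; group
        rw [this]; exact hb
      exact (e1.reachable).trans e2.reachable
    | one => intro x; rw [mul_one]
    | mul u v hu hv ihu ihv =>
      intro x
      have := (ihu x).trans (ihv (x * u))
      rwa [mul_assoc] at this
    | inv u hu ihu =>
      intro x
      have := (ihu (x * u⁻¹)).symm
      rwa [inv_mul_cancel_right] at this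
  -- the closed set
  set P : Set G := (H : Set G) ∪ {z | ∃ h ∈ H, z = s * h} with hP
  have step : ∀ x y : G, Γ.Adj x y → x ∈ P → y ∈ P := by
    intro x y hxy hx
    have hyx : y = α x * (α x⁻¹ * y) := by rw [map_inv]; group
    have ha : α x⁻¹ * y ∈ S := (hΓ x y).mp hxy
    set a := α x⁻¹ * y with hadef
    rcases hx with hx | ⟨h, hh, rfl⟩
    · -- x ∈ H, so y ∈ sH
      right
      refine ⟨s⁻¹ * (α x * a), ?_, by rw [hyx]; group⟩
      have h1 : s⁻¹ * α x * s ∈ H := conjKH s hs _ (αHK x hx)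
      have h2 : s⁻¹ * a ∈ H := Subgroup.subset_closure ⟨s, hs, a, ha, rfl⟩
      have : s⁻¹ * (α x * a) = (s⁻¹ * α x * s) * (s⁻¹ * a) := by group
      rw [this]; exact mul_mem h1 h2
    · -- x = s * h, so y ∈ H
      left
      have hy' : y = α s * α h * a := by rw [hyx, map_mul]
      set t := α s⁻¹ with htdef
      have htS : t ∈ S := hSm s hs
      have hts : α s = t⁻¹ := by rw [htdef, map_inv, inv_inv]
      have h1 : t⁻¹ * α h * t ∈ H := conjKH t htS _ (αHK h hh)
      have h2 : t⁻¹ * a ∈ H := Subgroup.subset_closure ⟨t, htS, a, ha, rfl⟩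
      have : y = (t⁻¹ * α h * t) * (t⁻¹ * a) := by rw [hy', hts]; group
      show y ∈ H
      rw [this]; exact mul_mem h1 h2
  -- walks preserve P
  have walkP : ∀ x y : G, Γ.Walk x y → x ∈ P → y ∈ P := by
    intro x y w
    induction w with
    | nil => exact id
    | cons h p ih => exact fun hx => ih (step _ _ h hx)
  -- Ks = sH
  have KsH : {x : G | ∃ h ∈ K, x = h * s} = {z | ∃ h ∈ H, z = s * h} := by
    ext x
    constructor
    · rintro ⟨k, hk, rfl⟩
      exact ⟨s⁻¹ * k * s, conjKH s hs k hk, by group⟩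
    · rintro ⟨h, hh, rfl⟩
      exact ⟨s * h * s⁻¹, conjHK s hs h hh, by group⟩
  ext x
  constructor
  · rintro hr
    obtain ⟨w⟩ := hr
    have : x ∈ P := walkP 1 x w (Or.inl (Subgroup.one_mem H))
    rcases this with h | h
    · exact Or.inl h
    · exact Or.inr (KsH ▸ h)
  · rintro (hx | hx)
    · have := move x hx 1
      rwa [one_mul] at this
    · have hx' : x ∈ {z | ∃ h ∈ H, z = s * h} := KsH ▸ hx
      obtain ⟨h, hh, rfl⟩ := hx'
      have e1 : Γ.Adj 1 s := by rw [hΓ]; simpa using hs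
      exact e1.reachable.trans (move h hh s)
end

section
/- Let GC(G,S,α) be a generalized Cayley graph over a finite group G with S nonempty. Then GC(G,S,α) is connected if and only if either (i) S is not contained in any right coset of any proper subgroup of G, or (ii) S ⊆ Hg for some g ∉ H with H = ⟨SS⁻¹⟩ a proper subgroup satisfying [G:H] = 2 and α(H) = H. -/
/-!
From a vertex `x` the edges lead to `α x * s` with `s ∈ S`, and two such steps from `p` land on
`p * a⁻¹ * b` with `a, b ∈ S`. Hence the right translates of `p` by `K = ⟨S⁻¹S⟩` are reachable
from `p`, and the component of `1` is `K ∪ H s₀`, where `H = ⟨SS⁻¹⟩ = α(K)` and `s₀ ∈ S`.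
If `H = G` the graph is connected and `S` lies in no coset of a proper subgroup. Otherwise
`G = K ∪ H s₀` with `|K| = |H| < |G|` forces `K = H`, `s₀ ∉ H` and `[G : H] = 2`, which is
condition (ii); conversely (ii) gives `K = α(H) = H` and `G = H ∪ H s₀`.
-/

open Subgroup
open scoped Pointwise

namespace SimpleGraph

variable {V : Type*} {Γ : SimpleGraph V}

theorem Reachable.mem_of_adj_closed {C : Set V} (hC : ∀ ⦃x y⦄, x ∈ C → Γ.Adj x y → y ∈ C)
    {u v : V} (huv : Γ.Reachable u v) (hu : u ∈ C) : v ∈ C := by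
  obtain ⟨w⟩ := huv
  induction w with
  | nil => exact hu
  | cons h _ ih => exact ih (hC hu h)

theorem connected_iff_forall_mem_of_adj_closed {u : V} {C : Set V} (hu : u ∈ C)
    (hC : ∀ ⦃x y⦄, x ∈ C → Γ.Adj x y → y ∈ C) (hreach : ∀ x ∈ C, Γ.Reachable u x) :
    Γ.Connected ↔ ∀ x, x ∈ C := by
  rw [connected_iff_exists_forall_reachable]
  refine ⟨fun ⟨v, hv⟩ x => ?_, fun h => ⟨u, fun x => hreach x (h x)⟩⟩
  exact ((hv u).symm.trans (hv x)).mem_of_adj_closed hC hu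

variable {G : Type*} [Group G]

def reachableRightShifts (Γ : SimpleGraph G) : Subgroup G where
  carrier := {g | ∀ p, Γ.Reachable p (p * g)}
  one_mem' p := by simp
  mul_mem' {a b} ha hb p := by simpa [mul_assoc] using (ha p).trans (hb (p * a))
  inv_mem' {a} ha p := by simpa using (ha (p * a⁻¹)).symm

end SimpleGraph

section Cosets

variable {G : Type*} [Group G]

theorem setOf_mul_inv_eq (S : Set G) : {u : G | ∃ a ∈ S, ∃ b ∈ S, u = a * b⁻¹} = S * S⁻¹ := by
  ext u
  constructor
  · rintro ⟨a, ha, b, hb, rfl⟩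
    exact ⟨a, ha, b⁻¹, by simpa using hb, rfl⟩
  · rintro ⟨a, ha, b, hb, rfl⟩
    exact ⟨a, ha, b⁻¹, hb, by rw [inv_inv]⟩

theorem mul_inv_subset_of_subset_coset {S : Set G} {H : Subgroup G} {g : G}
    (hS : S ⊆ {x | ∃ h ∈ H, x = h * g}) : S * S⁻¹ ⊆ H := by
  rintro _ ⟨a, ha, b, hb, rfl⟩
  obtain ⟨h₁, hh₁, rfl⟩ := hS ha
  obtain ⟨h₂, hh₂, hb'⟩ := hS (Set.mem_inv.mp hb)
  rw [← inv_inv b, hb']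
  simpa [mul_assoc] using mul_mem hh₁ (inv_mem hh₂)

theorem subset_coset_closure_mul_inv {S : Set G} {s₀ : G} (hs₀ : s₀ ∈ S) :
    S ⊆ {x | ∃ h ∈ closure (S * S⁻¹), x = h * s₀} := fun s hs =>
  ⟨s * s₀⁻¹, subset_closure (Set.mul_mem_mul hs (Set.inv_mem_inv.mpr hs₀)), by group⟩

theorem closure_mul_inv_eq_top_iff {S : Set G} (hS : S.Nonempty) :
    closure (S * S⁻¹) = ⊤ ↔ ¬ ∃ (H : Subgroup G) (g : G), H ≠ ⊤ ∧ S ⊆ {x | ∃ h ∈ H, x = h * g} := by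
  constructor
  · rintro htop ⟨H, g, hH, hsub⟩
    apply hH
    rw [eq_top_iff, ← htop, closure_le]
    exact mul_inv_subset_of_subset_coset hsub
  · intro h
    by_contra hne
    obtain ⟨s₀, hs₀⟩ := hS
    exact h ⟨_, s₀, hne, subset_coset_closure_mul_inv hs₀⟩

theorem le_of_forall_mem_or_mul_inv_mem {H K : Subgroup G} {g : G} (hH : H ≠ ⊤)
    (hcover : ∀ x, x ∈ K ∨ x * g⁻¹ ∈ H) : H ≤ K := by
  intro h hh
  by_cases hg : g ∈ H
  · obtain ⟨x, hx⟩ : ∃ x, x ∉ H := by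
      by_contra! hall
      exact hH (eq_top_iff' H |>.mpr hall)
    have hK : ∀ y, y ∉ H → y ∈ K := fun y hy =>
      (hcover y).resolve_right fun hyg => hy (by simpa using mul_mem hyg hg)
    have hxh : x * h ∉ H := fun hxh => hx (by simpa using mul_mem hxh (inv_mem hh))
    simpa using mul_mem (inv_mem (hK x hx)) (hK _ hxh)
  · exact (hcover h).resolve_right fun hhg => hg (by simpa using mul_mem (inv_mem hhg) hh)

theorem eq_and_index_eq_two_of_forall_mem_or_mul_inv_mem [Finite G] {H K : Subgroup G} {g : G}
    (hcard : Nat.card K = Nat.card H) (hH : H ≠ ⊤) (hcover : ∀ x, x ∈ K ∨ x * g⁻¹ ∈ H) :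
    g ∉ H ∧ K = H ∧ H.index = 2 := by
  have hKH : K = H :=
    (eq_of_le_of_card_ge (le_of_forall_mem_or_mul_inv_mem hH hcover) hcard.le).symm
  rw [hKH] at hcover
  have hg : g ∉ H := fun hg =>
    hH <| eq_top_iff' H |>.mpr fun x => (hcover x).elim id fun hx => by simpa using mul_mem hx hg
  refine ⟨hg, hKH, index_eq_two_iff_exists_notMem_and.mpr ⟨g⁻¹, by simpa using hg, ?_⟩⟩
  exact fun x => (hcover x).symm

theorem forall_mem_or_mul_inv_mem_of_index_eq_two {H : Subgroup G} {g : G} (hidx : H.index = 2)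
    (hg : g ∉ H) (x : G) : x ∈ H ∨ x * g⁻¹ ∈ H := by
  rw [or_iff_not_imp_left]
  exact fun hx => (mul_mem_iff_of_index_two hidx).mpr (iff_of_false hx (by simpa using hg))

end Cosets

namespace GeneralizedCayley

variable {G : Type*} [Group G] {α : G ≃* G} {S : Set G} {Γ : SimpleGraph G}

theorem image_inv_eq (hS : (fun s => α s⁻¹) '' S = S) : α '' S⁻¹ = S := by
  rwa [← Set.image_inv_eq_inv, Set.image_image]

theorem image_eq_inv (hS : (fun s => α s⁻¹) '' S = S) : α '' S = S⁻¹ := by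
  simpa [Set.image_inv] using congrArg Inv.inv (image_inv_eq hS)

theorem map_closure_mul_inv (hS : (fun s => α s⁻¹) '' S = S) :
    (closure (S * S⁻¹)).map α.toMonoidHom = closure (S⁻¹ * S) := by
  rw [MonoidHom.map_closure, MulEquiv.coe_toMonoidHom, Set.image_mul, image_eq_inv hS,
    image_inv_eq hS]

theorem map_closure_inv_mul (hS : (fun s => α s⁻¹) '' S = S) :
    (closure (S⁻¹ * S)).map α.toMonoidHom = closure (S * S⁻¹) := by
  rw [MonoidHom.map_closure, MulEquiv.coe_toMonoidHom, Set.image_mul, image_eq_inv hS,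
    image_inv_eq hS]

theorem adj_apply_mul (hΓ : ∀ x y, Γ.Adj x y ↔ α x⁻¹ * y ∈ S) (x : G) {s : G} (hs : s ∈ S) :
    Γ.Adj x (α x * s) := by
  rwa [hΓ, map_inv, inv_mul_cancel_left]

theorem closure_inv_mul_le_reachableRightShifts (hinv : ∀ g, α (α g) = g)
    (hS : (fun s => α s⁻¹) '' S = S) (hΓ : ∀ x y, Γ.Adj x y ↔ α x⁻¹ * y ∈ S) :
    closure (S⁻¹ * S) ≤ Γ.reachableRightShifts := by
  rw [closure_le]
  rintro _ ⟨a', ha', b, hb, rfl⟩ p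
  have ha : α a' ∈ S := image_inv_eq hS ▸ Set.mem_image_of_mem α ha'
  have hstep₁ := adj_apply_mul hΓ p ha
  have hstep₂ := adj_apply_mul hΓ (α p * α a') hb
  rw [map_mul, hinv, hinv, mul_assoc] at hstep₂
  exact hstep₁.reachable.trans hstep₂.reachable

theorem connected_iff_forall_mem_or_mul_inv_mem (hinv : ∀ g, α (α g) = g)
    (hS : (fun s => α s⁻¹) '' S = S) (hΓ : ∀ x y, Γ.Adj x y ↔ α x⁻¹ * y ∈ S)
    {s₀ : G} (hs₀ : s₀ ∈ S) :
    Γ.Connected ↔ ∀ x, x ∈ closure (S⁻¹ * S) ∨ x * s₀⁻¹ ∈ closure (S * S⁻¹) := by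
  have hmapK := map_closure_inv_mul hS
  have hmapH := map_closure_mul_inv hS
  set K := closure (S⁻¹ * S)
  set H := closure (S * S⁻¹)
  have hαK : ∀ k ∈ K, α k ∈ H := fun k hk => by
    rw [← hmapK]
    exact mem_map_of_mem _ hk
  have hαH : ∀ h ∈ H, α h ∈ K := fun h hh => by
    rw [← hmapH]
    exact mem_map_of_mem _ hh
  have hSH : ∀ s ∈ S, s * s₀⁻¹ ∈ H := fun s hs =>
    subset_closure (Set.mul_mem_mul hs (Set.inv_mem_inv.mpr hs₀))
  have hreachK : ∀ k ∈ K, Γ.Reachable 1 k := fun k hk => by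
    simpa using closure_inv_mul_le_reachableRightShifts hinv hS hΓ hk 1
  refine SimpleGraph.connected_iff_forall_mem_of_adj_closed (Or.inl K.one_mem) ?_ ?_
  · intro x y hx hxy
    obtain ⟨s, hs, rfl⟩ : ∃ s ∈ S, α x * s = y := ⟨_, (hΓ x y).mp hxy, by simp⟩
    rcases hx with hx | hx
    · exact Or.inr (by simpa [mul_assoc] using mul_mem (hαK x hx) (hSH s hs))
    · left
      have hs₀' : (α s₀⁻¹)⁻¹ * s ∈ K :=
        subset_closure (Set.mul_mem_mul (Set.inv_mem_inv.mpr (image_inv_eq hS ▸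
          Set.mem_image_of_mem α (Set.inv_mem_inv.mpr hs₀))) hs)
      simpa [mul_assoc] using mul_mem (hαH _ hx) hs₀'
  · rintro x (hx | hx)
    · exact hreachK x hx
    · have hadj := adj_apply_mul hΓ (α (x * s₀⁻¹)) hs₀
      rw [hinv, inv_mul_cancel_right] at hadj
      exact (hreachK _ (hαH _ hx)).trans hadj.reachable

end GeneralizedCayley

open GeneralizedCayley in
theorem stmt_13_general {G : Type*} [Group G] [Finite G] (α : G ≃* G)
    (hinv : ∀ g : G, α (α g) = g) (S : Set G) (hne : S.Nonempty)
    (hS2 : (fun s => α s⁻¹) '' S = S)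
    (Γ : SimpleGraph G) (hΓ : ∀ x y : G, Γ.Adj x y ↔ α x⁻¹ * y ∈ S) :
    Γ.Connected ↔
      ((¬ ∃ (H : Subgroup G) (g : G), H ≠ ⊤ ∧ S ⊆ {x : G | ∃ h ∈ H, x = h * g}) ∨
        (∃ g : G, g ∉ Subgroup.closure {u : G | ∃ a ∈ S, ∃ b ∈ S, u = a * b⁻¹} ∧
          S ⊆ {x : G | ∃ h ∈ Subgroup.closure {u : G | ∃ a ∈ S, ∃ b ∈ S, u = a * b⁻¹}, x = h * g} ∧
          Subgroup.closure {u : G | ∃ a ∈ S, ∃ b ∈ S, u = a * b⁻¹} ≠ ⊤ ∧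
          (Subgroup.closure {u : G | ∃ a ∈ S, ∃ b ∈ S, u = a * b⁻¹}).index = 2 ∧
          (⇑α) '' ↑(Subgroup.closure {u : G | ∃ a ∈ S, ∃ b ∈ S, u = a * b⁻¹}) =
            ↑(Subgroup.closure {u : G | ∃ a ∈ S, ∃ b ∈ S, u = a * b⁻¹}))) := by
  obtain ⟨s₀, hs₀⟩ := hne
  rw [setOf_mul_inv_eq, connected_iff_forall_mem_or_mul_inv_mem hinv hS2 hΓ hs₀,
    ← closure_mul_inv_eq_top_iff ⟨s₀, hs₀⟩]
  have hαH := map_closure_mul_inv hS2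
  set H := closure (S * S⁻¹)
  by_cases hH : H = ⊤
  · have hK : closure (S⁻¹ * S) = ⊤ := by
      rw [← hαH, hH, map_top_of_surjective _ α.surjective]
    simp [hH, hK]
  have hcard : Nat.card (closure (S⁻¹ * S)) = Nat.card H := by
    rw [← hαH, card_map_of_injective α.injective]
  have himage : ⇑α '' H = closure (S⁻¹ * S) := by
    rw [← hαH, coe_map, MulEquiv.coe_toMonoidHom]
  simp only [hH, false_or]
  constructor
  · intro hcover
    obtain ⟨hs₀H, hKH, hidx⟩ :=
      eq_and_index_eq_two_of_forall_mem_or_mul_inv_mem hcard hH hcover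
    exact ⟨s₀, hs₀H, subset_coset_closure_mul_inv hs₀, hH, hidx, by rw [himage, hKH]⟩
  · rintro ⟨g, hg, hSg, -, hidx, hαHH⟩
    have hKH : closure (S⁻¹ * S) = H := SetLike.coe_injective (himage ▸ hαHH)
    have hs₀H : s₀ ∉ H := by
      obtain ⟨h, hh, rfl⟩ := hSg hs₀
      exact fun hhg => hg (by simpa using mul_mem (inv_mem hh) hhg)
    rw [hKH]
    exact forall_mem_or_mul_inv_mem_of_index_eq_two hidx hs₀H

theorem stmt_13 {G : Type*} [Group G] [Finite G] (α : G ≃* G)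
    (hinv : ∀ g : G, α (α g) = g) (S : Set G) (hne : S.Nonempty)
    (hS1 : S ∩ {x : G | ∃ g : G, x = α g⁻¹ * g} = ∅)
    (hS2 : (fun s => α s⁻¹) '' S = S)
    (Γ : SimpleGraph G) (hΓ : ∀ x y : G, Γ.Adj x y ↔ α x⁻¹ * y ∈ S) :
    Γ.Connected ↔
      ((¬ ∃ (H : Subgroup G) (g : G), H ≠ ⊤ ∧ S ⊆ {x : G | ∃ h ∈ H, x = h * g}) ∨
        (∃ g : G, g ∉ Subgroup.closure {u : G | ∃ a ∈ S, ∃ b ∈ S, u = a * b⁻¹} ∧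
          S ⊆ {x : G | ∃ h ∈ Subgroup.closure {u : G | ∃ a ∈ S, ∃ b ∈ S, u = a * b⁻¹}, x = h * g} ∧
          Subgroup.closure {u : G | ∃ a ∈ S, ∃ b ∈ S, u = a * b⁻¹} ≠ ⊤ ∧
          (Subgroup.closure {u : G | ∃ a ∈ S, ∃ b ∈ S, u = a * b⁻¹}).index = 2 ∧
          (⇑α) '' ↑(Subgroup.closure {u : G | ∃ a ∈ S, ∃ b ∈ S, u = a * b⁻¹}) =
            ↑(Subgroup.closure {u : G | ∃ a ∈ S, ∃ b ∈ S, u = a * b⁻¹}))) :=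
  stmt_13_general α hinv S hne hS2 Γ hΓ
end

section
/- Let GC(G,S,α) be a generalized Cayley graph over a finite group G with S nonempty. Then GC(G,S,α) is connected if and only if ⟨S⟩ = G, [G : ⟨SS⁻¹⟩] ≤ 2, and α(⟨SS⁻¹⟩) = ⟨SS⁻¹⟩. -/
private lemma aux_inj3 {X : Type*} {a b c : X} (h1 : a ≠ b) (h2 : a ≠ c) (h3 : b ≠ c) :
    Function.Injective (![a, b, c] : Fin 3 → X) := by
  intro i j hij
  fin_cases i <;> fin_cases j <;> simp_all


theorem stmt_14 {G : Type*} [Group G] [Finite G] (α : G ≃* G)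
    (hinv : ∀ g : G, α (α g) = g) (S : Set G) (hne : S.Nonempty)
    (hS1 : S ∩ {x : G | ∃ g : G, x = α g⁻¹ * g} = ∅)
    (hS2 : (fun s => α s⁻¹) '' S = S)
    (Γ : SimpleGraph G) (hΓ : ∀ x y : G, Γ.Adj x y ↔ α x⁻¹ * y ∈ S) :
    Γ.Connected ↔
      (Subgroup.closure S = ⊤ ∧
        (Subgroup.closure {u : G | ∃ a ∈ S, ∃ b ∈ S, u = a * b⁻¹}).index ≤ 2 ∧
        (⇑α) '' ↑(Subgroup.closure {u : G | ∃ a ∈ S, ∃ b ∈ S, u = a * b⁻¹}) =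
          ↑(Subgroup.closure {u : G | ∃ a ∈ S, ∃ b ∈ S, u = a * b⁻¹})) := by
  classical
  obtain ⟨b, hbS⟩ := hne
  set H : Subgroup G := Subgroup.closure {u : G | ∃ a ∈ S, ∃ b ∈ S, u = a * b⁻¹} with hHdef
  set K : Subgroup G := Subgroup.closure {u : G | ∃ a ∈ S, ∃ b ∈ S, u = a⁻¹ * b} with hKdef
  have himg : ∀ s ∈ S, α s⁻¹ ∈ S := by
    intro s hs; rw [← hS2]; exact Set.mem_image_of_mem _ hs
  have hHgS : ∀ {a : G}, a ∈ S → ∀ {c : G}, c ∈ S → a * c⁻¹ ∈ H :=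
    fun {a} ha {c} hc => Subgroup.subset_closure ⟨a, ha, c, hc, rfl⟩
  have hKgS : ∀ {a : G}, a ∈ S → ∀ {c : G}, c ∈ S → a⁻¹ * c ∈ K :=
    fun {a} ha {c} hc => Subgroup.subset_closure ⟨a, ha, c, hc, rfl⟩
  -- α maps K into H and H into K
  have αKH : ∀ k ∈ K, α k ∈ H := by
    intro k hk
    induction hk using Subgroup.closure_induction with
    | mem x hx =>
      obtain ⟨a, ha, c, hc, rfl⟩ := hx
      have e : α (a⁻¹ * c) = (α a⁻¹) * (α c⁻¹)⁻¹ := by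
        simp [map_mul, map_inv]
      rw [e]; exact hHgS (himg a ha) (himg c hc)
    | one => simpa using H.one_mem
    | mul x y hx hy ihx ihy => rw [map_mul]; exact H.mul_mem ihx ihy
    | inv x hx ih => rw [map_inv]; exact H.inv_mem ih
  have αHK : ∀ h ∈ H, α h ∈ K := by
    intro h hh
    induction hh using Subgroup.closure_induction with
    | mem x hx =>
      obtain ⟨a, ha, c, hc, rfl⟩ := hx
      have e : α (a * c⁻¹) = (α a⁻¹)⁻¹ * (α c⁻¹) := by
        simp [map_mul, map_inv]
      rw [e]; exact hKgS (himg a ha) (himg c hc)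
    | one => simpa using K.one_mem
    | mul x y hx hy ihx ihy => rw [map_mul]; exact K.mul_mem ihx ihy
    | inv x hx ih => rw [map_inv]; exact K.inv_mem ih
  -- conjugation by elements of S
  have conjSK : ∀ c ∈ S, ∀ h ∈ H, c⁻¹ * h * c ∈ K := by
    intro c hc h hh
    induction hh using Subgroup.closure_induction with
    | mem x hx =>
      obtain ⟨a, ha, e, he, rfl⟩ := hx
      have ee : c⁻¹ * (a * e⁻¹) * c = (c⁻¹ * a) * (c⁻¹ * e)⁻¹ := by group
      rw [ee]; exact K.mul_mem (hKgS hc ha) (K.inv_mem (hKgS hc he))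
    | one => simpa using K.one_mem
    | mul x y hx hy ihx ihy =>
      have ee : c⁻¹ * (x * y) * c = (c⁻¹ * x * c) * (c⁻¹ * y * c) := by group
      rw [ee]; exact K.mul_mem ihx ihy
    | inv x hx ih =>
      have ee : c⁻¹ * x⁻¹ * c = (c⁻¹ * x * c)⁻¹ := by group
      rw [ee]; exact K.inv_mem ih
  have conjKH : ∀ c ∈ S, ∀ k ∈ K, c * k * c⁻¹ ∈ H := by
    intro c hc k hk
    induction hk using Subgroup.closure_induction with
    | mem x hx =>
      obtain ⟨a, ha, e, he, rfl⟩ := hx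
      have ee : c * (a⁻¹ * e) * c⁻¹ = (c * a⁻¹) * (e * c⁻¹) := by group
      have h2 : e * c⁻¹ ∈ H := hHgS he hc
      rw [ee]; exact H.mul_mem (hHgS hc ha) h2
    | one => simpa using H.one_mem
    | mul x y hx hy ihx ihy =>
      have ee : c * (x * y) * c⁻¹ = (c * x * c⁻¹) * (c * y * c⁻¹) := by group
      rw [ee]; exact H.mul_mem ihx ihy
    | inv x hx ih =>
      have ee : c * x⁻¹ * c⁻¹ = (c * x * c⁻¹)⁻¹ := by group
      rw [ee]; exact H.inv_mem ih
  -- two-step walks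
  have twostep : ∀ s ∈ S, ∀ t ∈ S, ∀ x : G, Γ.Reachable x (x * (s⁻¹ * t)) := by
    intro s hs t ht x
    have hu : α s⁻¹ ∈ S := himg s hs
    have hαu : α (α s⁻¹) = s⁻¹ := hinv _
    have h1 : Γ.Adj x (α x * α s⁻¹) := by
      rw [hΓ, map_inv, inv_mul_cancel_left]; exact hu
    have h2 : Γ.Adj (α x * α s⁻¹) (x * (s⁻¹ * t)) := by
      rw [hΓ, map_inv, map_mul, hinv, hαu]
      have e : (x * s⁻¹)⁻¹ * (x * (s⁻¹ * t)) = t := by group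
      rw [e]; exact ht
    exact h1.reachable.trans h2.reachable
  have Ktrans : ∀ k ∈ K, ∀ x : G, Γ.Reachable x (x * k) := by
    intro k hk
    induction hk using Subgroup.closure_induction with
    | mem g hg =>
      intro x; obtain ⟨s, hs, t, ht, rfl⟩ := hg; exact twostep s hs t ht x
    | one => intro x; rw [mul_one]
    | mul g h hg hh ihg ihh =>
      intro x
      have := (ihg x).trans (ihh (x * g))
      rwa [mul_assoc] at this
    | inv g hg ih =>
      intro x
      have h1 := ih (x * g⁻¹)
      have e : x * g⁻¹ * g = x := by group
      rw [e] at h1; exact h1.symm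
  -- the component of 1
  set C : G → Prop := fun g => g ∈ K ∨ b⁻¹ * g ∈ K with hCdef
  have step : ∀ {x y : G}, Γ.Adj x y → C x → C y := by
    intro x y hxy hx
    have hsS : (α x)⁻¹ * y ∈ S := by
      have := (hΓ x y).mp hxy; rwa [map_inv] at this
    rcases hx with hxK | hxbK
    · right
      have h1 : b⁻¹ * (α x) * b ∈ K := conjSK b hbS _ (αKH x hxK)
      have h2 : b⁻¹ * ((α x)⁻¹ * y) ∈ K := hKgS hbS hsS
      have e : b⁻¹ * y = (b⁻¹ * (α x) * b) * (b⁻¹ * ((α x)⁻¹ * y)) := by group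
      rw [e]; exact K.mul_mem h1 h2
    · left
      have hcS : α b⁻¹ ∈ S := himg b hbS
      have hαk : α (b⁻¹ * x) ∈ H := αKH _ hxbK
      have h1 : (α b⁻¹)⁻¹ * (α (b⁻¹ * x)) * (α b⁻¹) ∈ K := conjSK _ hcS _ hαk
      have h2 : (α b⁻¹)⁻¹ * ((α x)⁻¹ * y) ∈ K := hKgS hcS hsS
      have e : y = ((α b⁻¹)⁻¹ * (α (b⁻¹ * x)) * (α b⁻¹)) * ((α b⁻¹)⁻¹ * ((α x)⁻¹ * y)) := by
        rw [map_mul, map_inv]; group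
      rw [e]; exact K.mul_mem h1 h2
  have walkC : ∀ {u v : G}, Γ.Walk u v → C u → C v := by
    intro u v w
    induction w with
    | nil => exact id
    | cons h _ ih => exact fun hu => ih (step h hu)
  have reach1 : ∀ x : G, Γ.Reachable 1 x ↔ C x := by
    intro x
    constructor
    · intro h; obtain ⟨w⟩ := h; exact walkC w (Or.inl K.one_mem)
    · rintro (h | h)
      · have := Ktrans x h 1; rwa [one_mul] at this
      · have h0 : Γ.Adj 1 b := by rw [hΓ]; simpa using hbS
        have h1 := Ktrans _ h b
        have e : b * (b⁻¹ * x) = x := by group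
        rw [e] at h1
        exact h0.reachable.trans h1
  have hconn : Γ.Connected ↔ ∀ x : G, C x := by
    constructor
    · intro h x; exact (reach1 x).mp (h.preconnected 1 x)
    · intro h
      rw [SimpleGraph.connected_iff]
      refine ⟨fun u v => ?_, ⟨1⟩⟩
      exact ((reach1 u).mpr (h u)).symm.trans ((reach1 v).mpr (h v))
  have αimg : ((⇑α) '' (H : Set G) = (H : Set G)) ↔ H = K := by
    constructor
    · intro he
      apply le_antisymm
      · intro h hh
        have : h ∈ (⇑α) '' (H : Set G) := by rw [he]; exact hh
        obtain ⟨h', hh', rfl⟩ := this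
        exact αHK h' hh'
      · intro k hk
        have h1 : α k ∈ H := αKH k hk
        have h2 : α (α k) ∈ (⇑α) '' (H : Set G) := Set.mem_image_of_mem _ h1
        rw [he, hinv] at h2; exact h2
    · intro he
      apply Set.Subset.antisymm
      · rintro _ ⟨h, hh, rfl⟩
        have := αHK h hh; rwa [← he] at this
      · intro h hh
        refine ⟨α h, ?_, hinv h⟩
        have : α h ∈ K := αHK h hh
        rwa [← he] at this
  rw [hconn]
  constructor
  · intro hall
    have hKS : K ≤ Subgroup.closure S := by
      rw [hKdef, Subgroup.closure_le]
      rintro g ⟨a, ha, c, hc, rfl⟩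
      exact Subgroup.mul_mem _ (Subgroup.inv_mem _ (Subgroup.subset_closure ha))
        (Subgroup.subset_closure hc)
    have htop : Subgroup.closure S = ⊤ := by
      rw [Subgroup.eq_top_iff']
      intro g
      rcases hall g with h | h
      · exact hKS h
      · have e : g = b * (b⁻¹ * g) := by group
        rw [e]; exact Subgroup.mul_mem _ (Subgroup.subset_closure hbS) (hKS h)
    by_cases hbK : b ∈ K
    · have hKtop : K = ⊤ := by
        rw [Subgroup.eq_top_iff']; intro g
        rcases hall g with h | h
        · exact h
        · have e : g = b * (b⁻¹ * g) := by group
          rw [e]; exact K.mul_mem hbK h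
      have hHtop : H = ⊤ := by
        rw [Subgroup.eq_top_iff']; intro g
        have hk : b⁻¹ * g * b ∈ K := by rw [hKtop]; trivial
        have h2 := conjKH b hbS _ hk
        have e : b * (b⁻¹ * g * b) * b⁻¹ = g := by group
        rwa [e] at h2
      refine ⟨htop, ?_, αimg.mpr (hHtop.trans hKtop.symm)⟩
      rw [hHtop, Subgroup.index_top]; omega
    · have hb2 : b⁻¹ * b⁻¹ ∈ K := by
        rcases hall b⁻¹ with h | h
        · exact absurd (by simpa using K.inv_mem h) hbK
        · exact h
      have hconj2 : ∀ k ∈ K, b⁻¹ * k * b ∈ K := by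
        intro k hk
        rcases hall (b⁻¹ * k * b) with h | h
        · exact h
        · exfalso; apply hbK
          have h1 : k * b ∈ K := by
            have h2 := K.mul_mem (K.inv_mem hb2) h
            have e : (b⁻¹ * b⁻¹)⁻¹ * (b⁻¹ * (b⁻¹ * k * b)) = k * b := by group
            rwa [e] at h2
          have h2 := K.mul_mem (K.inv_mem hk) h1
          have e : k⁻¹ * (k * b) = b := by group
          rwa [e] at h2
      have hconj1 : ∀ k ∈ K, b * k * b⁻¹ ∈ K := by
        intro k hk
        rcases hall (b * k * b⁻¹) with h | h
        · exact h
        · exfalso; apply hbK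
          have h1 : k * b⁻¹ ∈ K := by
            have e : b⁻¹ * (b * k * b⁻¹) = k * b⁻¹ := by group
            rwa [e] at h
          have h2 := K.mul_mem (K.inv_mem hk) h1
          have e : k⁻¹ * (k * b⁻¹) = b⁻¹ := by group
          rw [e] at h2
          simpa using K.inv_mem h2
      have hHK : H = K := by
        apply le_antisymm
        · intro h hh
          have h1 := hconj1 _ (conjSK b hbS h hh)
          have e : b * (b⁻¹ * h * b) * b⁻¹ = h := by group
          rwa [e] at h1
        · intro k hk
          have h1 := conjKH b hbS _ (hconj2 k hk)
          have e : b * (b⁻¹ * k * b) * b⁻¹ = k := by group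
          rwa [e] at h1
      refine ⟨htop, ?_, αimg.mpr hHK⟩
      rw [hHK]
      have hsurj : Function.Surjective
          (fun t : Bool => if t then (QuotientGroup.mk b : G ⧸ K) else QuotientGroup.mk 1) := by
        intro q
        obtain ⟨g, rfl⟩ := QuotientGroup.mk_surjective q
        rcases hall g with h | h
        · refine ⟨false, ?_⟩
          show (QuotientGroup.mk 1 : G ⧸ K) = QuotientGroup.mk g
          exact QuotientGroup.eq.mpr (by simpa using h)
        · refine ⟨true, ?_⟩
          show (QuotientGroup.mk b : G ⧸ K) = QuotientGroup.mk g
          exact QuotientGroup.eq.mpr h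
      have hle := Nat.card_le_card_of_surjective _ hsurj
      have e2 : Nat.card Bool = 2 := by simp [Nat.card_eq_fintype_card]
      have eidx : K.index = Nat.card (G ⧸ K) := rfl
      omega
  · rintro ⟨htop, hidx, himgH⟩
    have hHK : H = K := αimg.mp himgH
    intro g
    show g ∈ K ∨ b⁻¹ * g ∈ K
    by_cases hbK : b ∈ K
    · left
      have hStop : Subgroup.closure S ≤ K := by
        rw [Subgroup.closure_le]
        intro s hs
        have e : s = b * (b⁻¹ * s) := by group
        rw [e]; exact K.mul_mem hbK (hKgS hbS hs)
      have hg : g ∈ Subgroup.closure S := by rw [htop]; trivial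
      exact hStop hg
    · have hKidx : K.index ≤ 2 := by rw [← hHK]; exact hidx
      by_contra hg
      push_neg at hg
      obtain ⟨hg1, hg2⟩ := hg
      have h01 : (QuotientGroup.mk 1 : G ⧸ K) ≠ QuotientGroup.mk b := by
        rw [Ne, QuotientGroup.eq]; simpa using hbK
      have h02 : (QuotientGroup.mk 1 : G ⧸ K) ≠ QuotientGroup.mk g := by
        rw [Ne, QuotientGroup.eq]; simpa using hg1
      have h12 : (QuotientGroup.mk b : G ⧸ K) ≠ QuotientGroup.mk g := by
        rw [Ne, QuotientGroup.eq]; exact hg2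
      have hinj : Function.Injective
          (![QuotientGroup.mk 1, QuotientGroup.mk b, QuotientGroup.mk g] : Fin 3 → G ⧸ K) :=
        aux_inj3 h01 h02 h12
      have hle := Nat.card_le_card_of_injective _ hinj
      have hfin : (3 : ℕ) ≤ 2 := by
        calc (3 : ℕ) = Nat.card (Fin 3) := by simp
          _ ≤ Nat.card (G ⧸ K) := hle
          _ = K.index := rfl
          _ ≤ 2 := hKidx
      omega
end

section
/- Let GC(G,S,α) be a connected generalized Cayley graph over a finite group G with S nonempty. Then the following are equivalent: (i) GC(G,S,α) is bipartite; (ii) |⟨SS⁻¹⟩| = |G|/2; (iii) S ∩ ⟨SS⁻¹⟩ = ∅. -/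
theorem stmt_15 {G : Type*} [Group G] [Finite G] (α : G ≃* G)
    (hinv : ∀ g : G, α (α g) = g) (S : Set G) (hne : S.Nonempty)
    (hS1 : S ∩ {x : G | ∃ g : G, x = α g⁻¹ * g} = ∅)
    (hS2 : (fun s => α s⁻¹) '' S = S)
    (Γ : SimpleGraph G) (hΓ : ∀ x y : G, Γ.Adj x y ↔ α x⁻¹ * y ∈ S)
    (hconn : Γ.Connected) :
    (Γ.Colorable 2 ↔
        2 * Nat.card (Subgroup.closure {u : G | ∃ a ∈ S, ∃ b ∈ S, u = a * b⁻¹}) = Nat.card G) ∧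
      (Γ.Colorable 2 ↔
        S ∩ ↑(Subgroup.closure {u : G | ∃ a ∈ S, ∃ b ∈ S, u = a * b⁻¹}) = ∅) := by
  classical
  obtain ⟨s₀, hs₀⟩ := hne
  set T : Set G := {u : G | ∃ a ∈ S, ∃ b ∈ S, u = a * b⁻¹} with hTdef
  set H : Subgroup G := Subgroup.closure T with hHdef
  set T' : Set G := {u : G | ∃ a ∈ S, ∃ b ∈ S, u = a⁻¹ * b} with hT'def
  set K : Subgroup G := Subgroup.closure T' with hKdef
  -- basic facts about S
  have hSmem : ∀ s ∈ S, α s⁻¹ ∈ S := by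
    intro s hs
    rw [← hS2]; exact ⟨s, hs, rfl⟩
  have hSsur : ∀ s ∈ S, ∃ c ∈ S, α c⁻¹ = s := by
    intro s hs
    rw [← hS2] at hs; obtain ⟨c, hc, h⟩ := hs; exact ⟨c, hc, h⟩
  -- α maps T onto T'
  have himg : (⇑α '' T) = T' := by
    ext u
    constructor
    · rintro ⟨w, ⟨a, ha, b, hb, rfl⟩, rfl⟩
      obtain ⟨c, hc, hca⟩ := hSsur a ha
      obtain ⟨d, hd, hdb⟩ := hSsur b hb
      refine ⟨c, hc, d, hd, ?_⟩
      subst hca; subst hdb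
      simp [map_mul, map_inv, hinv]
    · rintro ⟨a, ha, b, hb, rfl⟩
      refine ⟨α a⁻¹ * (α b⁻¹)⁻¹, ⟨α a⁻¹, hSmem a ha, α b⁻¹, hSmem b hb, rfl⟩, ?_⟩
      simp [map_mul, map_inv, hinv]
  have hmap : Subgroup.map α.toMonoidHom H = K := by
    have h' : (⇑α.toMonoidHom '' T) = T' := by simpa using himg
    rw [hHdef, MonoidHom.map_closure, h', hKdef]
  have hKH : ∀ x : G, x ∈ K ↔ α x ∈ H := by
    intro x
    rw [← hmap]
    constructor
    · intro hx
      obtain ⟨h, hh, hhx⟩ := Subgroup.mem_map.1 hx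
      have : α x = h := by rw [← hhx]; exact hinv h
      rwa [this]
    · intro hx; exact Subgroup.mem_map.2 ⟨α x, hx, hinv x⟩
  have hHK : ∀ x : G, x ∈ H ↔ α x ∈ K := by
    intro x
    have := hKH (α x); rw [hinv] at this; exact this.symm
  have hgen : ∀ a ∈ S, ∀ b ∈ S, a⁻¹ * b ∈ K := by
    intro a ha b hb; exact Subgroup.subset_closure ⟨a, ha, b, hb, rfl⟩
  -- conjugation by elements of S maps H into K
  have hconjK : ∀ c ∈ S, ∀ h ∈ H, c⁻¹ * h * c ∈ K := by
    intro c hc h hh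
    refine Subgroup.closure_induction (p := fun g _ => c⁻¹ * g * c ∈ K) ?_ ?_ ?_ ?_ hh
    · rintro x ⟨a, ha, b, hb, rfl⟩
      show c⁻¹ * (a * b⁻¹) * c ∈ K
      have h1 : c⁻¹ * a ∈ K := hgen c hc a ha
      have h2 : c⁻¹ * b ∈ K := hgen c hc b hb
      have he : c⁻¹ * (a * b⁻¹) * c = (c⁻¹ * a) * (c⁻¹ * b)⁻¹ := by group
      rw [he]; exact mul_mem h1 (inv_mem h2)
    · show c⁻¹ * 1 * c ∈ K
      have he : c⁻¹ * 1 * c = 1 := by group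
      rw [he]; exact K.one_mem
    · intro x y hx hy px py
      show c⁻¹ * (x * y) * c ∈ K
      have he : c⁻¹ * (x * y) * c = (c⁻¹ * x * c) * (c⁻¹ * y * c) := by group
      rw [he]; exact mul_mem px py
    · intro x hx px
      show c⁻¹ * x⁻¹ * c ∈ K
      have he : c⁻¹ * x⁻¹ * c = (c⁻¹ * x * c)⁻¹ := by group
      rw [he]; exact inv_mem px
  -- one step of a walk changes parity
  have hS1' : ∀ x y : G, Γ.Adj x y → x ∈ K → s₀⁻¹ * y ∈ K := by
    intro x y hxy hx
    have hs : α x⁻¹ * y ∈ S := (hΓ x y).1 hxy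
    have hy : y = α x * (α x⁻¹ * y) := by rw [map_inv]; group
    have h1 : s₀⁻¹ * (α x) * s₀ ∈ K := hconjK s₀ hs₀ (α x) ((hKH x).1 hx)
    have h2 : s₀⁻¹ * (α x⁻¹ * y) ∈ K := hgen s₀ hs₀ _ hs
    have he : s₀⁻¹ * y = (s₀⁻¹ * α x * s₀) * (s₀⁻¹ * (α x⁻¹ * y)) := by
      rw [map_inv]; group
    rw [he]; exact mul_mem h1 h2
  have hS2' : ∀ x y : G, Γ.Adj x y → s₀⁻¹ * x ∈ K → y ∈ K := by
    intro x y hxy hx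
    have hs : α x⁻¹ * y ∈ S := (hΓ x y).1 hxy
    obtain ⟨c, hc, hcs⟩ := hSsur s₀ hs₀
    have hαs₀ : α s₀ = c⁻¹ := by rw [← hcs, hinv]
    have hk : α (s₀⁻¹ * x) ∈ H := (hKH _).1 hx
    have h1 : c⁻¹ * α (s₀⁻¹ * x) * c ∈ K := hconjK c hc _ hk
    have h2 : c⁻¹ * (α x⁻¹ * y) ∈ K := hgen c hc _ hs
    have he : y = (c⁻¹ * α (s₀⁻¹ * x) * c) * (c⁻¹ * (α x⁻¹ * y)) := by
      rw [map_mul, map_inv, map_inv, hαs₀]; group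
    rw [he]; exact mul_mem h1 h2
  have hstep : ∀ x y : G, Γ.Adj x y →
      ((x ∈ K ∨ s₀⁻¹ * x ∈ K) → (y ∈ K ∨ s₀⁻¹ * y ∈ K)) := by
    intro x y hxy hx
    rcases hx with hx | hx
    · exact Or.inr (hS1' x y hxy hx)
    · exact Or.inl (hS2' x y hxy hx)
  have hwalk : ∀ x y : G, Γ.Walk x y →
      ((x ∈ K ∨ s₀⁻¹ * x ∈ K) → (y ∈ K ∨ s₀⁻¹ * y ∈ K)) := by
    intro x y p
    induction p with
    | nil => exact id
    | cons h q ih => intro hx; exact ih (hstep _ _ h hx)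
  have hcover : ∀ g : G, g ∈ K ∨ s₀⁻¹ * g ∈ K := by
    intro g
    obtain ⟨p⟩ := hconn.preconnected s₀ g
    exact hwalk s₀ g p (Or.inr (by rw [inv_mul_cancel]; exact K.one_mem))
  have hdisj : s₀ ∉ K → ∀ g : G, g ∈ K → s₀⁻¹ * g ∈ K → False := by
    intro hD g hg hg'
    apply hD
    have : s₀ = g * (s₀⁻¹ * g)⁻¹ := by group
    rw [this]; exact mul_mem hg (inv_mem hg')
  -- even walks realize elements of K
  have hEW : ∀ k ∈ K, ∀ g : G, ∃ p : Γ.Walk g (g * k), Even p.length := by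
    intro k hk
    refine Subgroup.closure_induction
      (p := fun k _ => ∀ g : G, ∃ p : Γ.Walk g (g * k), Even p.length) ?_ ?_ ?_ ?_ hk
    · rintro u ⟨a, ha, b, hb, rfl⟩ g
      have h1 : Γ.Adj g (α g * α a⁻¹) := by
        rw [hΓ]
        have he : α g⁻¹ * (α g * α a⁻¹) = α a⁻¹ := by rw [map_inv]; group
        rw [he]; exact hSmem a ha
      have h2 : Γ.Adj (α g * α a⁻¹) (g * (a⁻¹ * b)) := by
        rw [hΓ]
        have he : α (α g * α a⁻¹)⁻¹ * (g * (a⁻¹ * b)) = b := by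
          rw [map_inv, map_mul, hinv, hinv]; group
        rw [he]; exact hb
      exact ⟨SimpleGraph.Walk.cons h1 (SimpleGraph.Walk.cons h2 SimpleGraph.Walk.nil),
        by simp [SimpleGraph.Walk.length_cons]⟩
    · intro g
      exact ⟨SimpleGraph.Walk.nil.copy rfl (mul_one g).symm,
        by rw [SimpleGraph.Walk.length_copy]; simp⟩
    · intro k₁ k₂ hk₁ hk₂ ih₁ ih₂ g
      obtain ⟨p₁, hp₁⟩ := ih₁ g
      obtain ⟨p₂, hp₂⟩ := ih₂ (g * k₁)
      refine ⟨(p₁.append p₂).copy rfl (mul_assoc g k₁ k₂), ?_⟩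
      rw [SimpleGraph.Walk.length_copy, SimpleGraph.Walk.length_append]
      exact hp₁.add hp₂
    · intro k hk ih g
      obtain ⟨p, hp⟩ := ih (g * k⁻¹)
      refine ⟨(p.copy rfl (inv_mul_cancel_right g k)).reverse, ?_⟩
      rw [SimpleGraph.Walk.length_reverse, SimpleGraph.Walk.length_copy]
      exact hp
  -- parity along a walk, for a 2-coloring
  have hfin : ∀ a b c : Fin 2, a ≠ b → (a = c ↔ ¬ b = c) := by decide
  have hpar : ∀ (C : Γ.Coloring (Fin 2)) (u v : G) (p : Γ.Walk u v),
      (C u = C v ↔ Even p.length) := by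
    intro C u v p
    induction p with
    | nil => simp
    | cons h q ih =>
      rw [SimpleGraph.Walk.length_cons, Nat.even_add_one, ← ih]
      exact hfin _ _ _ (C.valid h)
  -- 2-colorability ↔ s₀ ∉ K
  have hcol : Γ.Colorable 2 ↔ s₀ ∉ K := by
    constructor
    · rintro ⟨C⟩ hs₀K
      obtain ⟨p, hp⟩ := hEW s₀ hs₀K 1
      have hadj : Γ.Adj (1 * s₀) 1 := by
        rw [hΓ]
        have he : α (1 * s₀)⁻¹ * 1 = α s₀⁻¹ := by rw [one_mul, mul_one]
        rw [he]; exact hSmem s₀ hs₀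
      have hq := (hpar C 1 1 (p.append (SimpleGraph.Walk.cons hadj SimpleGraph.Walk.nil))).1 rfl
      rw [SimpleGraph.Walk.length_append, SimpleGraph.Walk.length_cons,
        SimpleGraph.Walk.length_nil] at hq
      obtain ⟨m, hm⟩ := hp
      obtain ⟨n, hn⟩ := hq
      omega
    · intro hD
      refine ⟨SimpleGraph.Coloring.mk (fun g => if g ∈ K then 0 else 1) ?_⟩
      intro x y hxy
      rcases hcover x with hx | hx
      · have hy : s₀⁻¹ * y ∈ K := hS1' x y hxy hx
        have hy' : y ∉ K := fun h => hdisj hD y h hy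
        simp only [if_pos hx, if_neg hy']
        decide
      · have hx' : x ∉ K := fun h => hdisj hD x h hx
        have hy : y ∈ K := hS2' x y hxy hx
        simp only [if_neg hx', if_pos hy]
        decide
  -- s₀ ∉ K ↔ index 2
  have hcardK : s₀ ∉ K ↔ 2 * Nat.card K = Nat.card G := by
    constructor
    · intro hD
      have hidx : K.index = 2 := by
        rw [Subgroup.index_eq_card, Nat.card_eq_two_iff' ((1 : G) : G ⧸ K)]
        refine ⟨((s₀ : G) : G ⧸ K), ?_, ?_⟩
        · intro h
          rw [QuotientGroup.eq, mul_one] at h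
          exact hD (inv_mem_iff.1 h)
        · intro z hz
          induction z using QuotientGroup.induction_on with
          | H g =>
            rcases hcover g with hg | hg
            · exact absurd (by rw [QuotientGroup.eq, mul_one]; exact inv_mem_iff.2 hg) hz
            · rw [QuotientGroup.eq]
              have := inv_mem hg
              rwa [mul_inv_rev, inv_inv] at this
      have hmi := Subgroup.card_mul_index K
      rw [hidx] at hmi
      omega
    · intro h2 hs₀K
      have hKtop : K = ⊤ := by
        rw [eq_top_iff]
        intro g _
        rcases hcover g with hg | hg
        · exact hg
        · have he : g = s₀ * (s₀⁻¹ * g) := by group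
          rw [he]; exact mul_mem hs₀K hg
      have hc : Nat.card K = Nat.card G := by rw [hKtop]; exact Subgroup.card_top
      have hpos : 0 < Nat.card G := Nat.card_pos
      omega
  have cardHK : Nat.card H = Nat.card K := by
    rw [← hmap]
    exact Nat.card_congr
      (Subgroup.equivMapOfInjective H α.toMonoidHom α.injective).toEquiv
  -- s₀ ∉ K ↔ S ∩ H = ∅
  have hSH : ∀ s ∈ S, (s ∈ H ↔ s₀ ∈ K) := by
    intro s hs
    rw [hHK s]
    obtain ⟨c, hc, hcs⟩ := hSsur s hs
    have hαs : α s = c⁻¹ := by rw [← hcs, hinv]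
    rw [hαs, inv_mem_iff]
    have h2 := hgen s₀ hs₀ c hc
    constructor
    · intro h
      have he : s₀ = c * (s₀⁻¹ * c)⁻¹ := by group
      rw [he]; exact mul_mem h (inv_mem h2)
    · intro h
      have he : c = s₀ * (s₀⁻¹ * c) := by group
      rw [he]; exact mul_mem h h2
  have hint : s₀ ∉ K ↔ S ∩ (H : Set G) = ∅ := by
    constructor
    · intro hD
      rw [Set.eq_empty_iff_forall_notMem]
      rintro x ⟨hxS, hxH⟩
      exact hD ((hSH x hxS).1 hxH)
    · intro hemp hs₀K
      have : s₀ ∈ S ∩ (H : Set G) := ⟨hs₀, (hSH s₀ hs₀).2 hs₀K⟩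
      rw [hemp] at this
      exact this
  constructor
  · rw [hcol, cardHK]; exact hcardK
  · rw [hcol]; exact hint
end

section
/- Let G be a finite abelian group, α an involutory automorphism, and S a nonempty generalized Cayley subset. Then GC(G,S,α) is connected if and only if ⟨S⟩ = G and [G : ⟨SS⁻¹⟩] ≤ 2. -/
theorem stmt_16 {G : Type*} [CommGroup G] [Finite G] (α : G ≃* G)
    (hinv : ∀ g : G, α (α g) = g) (S : Set G) (hne : S.Nonempty)
    (hS1 : S ∩ {x : G | ∃ g : G, x = α g⁻¹ * g} = ∅)
    (hS2 : (fun s => α s⁻¹) '' S = S)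
    (Γ : SimpleGraph G) (hΓ : ∀ x y : G, Γ.Adj x y ↔ α x⁻¹ * y ∈ S) :
    Γ.Connected ↔
      (Subgroup.closure S = ⊤ ∧
        (Subgroup.closure {u : G | ∃ a ∈ S, ∃ b ∈ S, u = a * b⁻¹}).index ≤ 2) := by
  classical
  obtain ⟨s0, hs0⟩ := hne
  set H := Subgroup.closure {u : G | ∃ a ∈ S, ∃ b ∈ S, u = a * b⁻¹} with hH
  have hαS : ∀ s ∈ S, α s⁻¹ ∈ S := by
    intro s hs
    rw [← hS2]
    exact ⟨s, hs, rfl⟩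
  have hgen : ∀ a ∈ S, ∀ b ∈ S, a * b⁻¹ ∈ H := by
    intro a ha b hb
    exact Subgroup.subset_closure ⟨a, ha, b, hb, rfl⟩
  have hkey : ∀ s ∈ S, ∀ t ∈ S, α s * t ∈ H := by
    intro s hs t ht
    have h1 : α s * t = t * (α s⁻¹)⁻¹ := by
      rw [map_inv, inv_inv, mul_comm]
    rw [h1]
    exact hgen t ht _ (hαS s hs)
  have hAdj : ∀ x y : G, Γ.Adj x y ↔ ∃ s ∈ S, y = α x * s := by
    intro x y
    rw [hΓ]
    constructor
    · intro h
      exact ⟨α x⁻¹ * y, h, by rw [map_inv]; group⟩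
    · rintro ⟨s, hs, rfl⟩
      rw [map_inv]
      simpa using hs
  have L1 : ∀ h ∈ H, ∀ x : G, Γ.Reachable x (x * h) := by
    intro h hh
    induction hh using Subgroup.closure_induction with
    | mem g hg =>
      obtain ⟨a, ha, b, hb, rfl⟩ := hg
      intro x
      have hc : α b⁻¹ ∈ S := hαS b hb
      have step1 : Γ.Adj x (α x * α b⁻¹) := (hAdj _ _).2 ⟨_, hc, rfl⟩
      have step2 : Γ.Adj (α x * α b⁻¹) (x * (a * b⁻¹)) := by
        refine (hAdj _ _).2 ⟨a, ha, ?_⟩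
        rw [map_mul, hinv, hinv]
        simp [mul_comm, mul_assoc, mul_left_comm]
      exact step1.reachable.trans step2.reachable
    | one =>
      intro x
      rw [mul_one]
    | mul a b _ _ iha ihb =>
      intro x
      simpa [mul_assoc] using (iha x).trans (ihb (x * a))
    | inv a _ iha =>
      intro x
      have := (iha (x * a⁻¹)).symm
      simpa using this
  have L2 : ∀ (x y : G) (w : Γ.Walk x y),
      x⁻¹ * y ∈ H ∨ (α x * s0)⁻¹ * y ∈ H := by
    intro x y w
    induction w with
    | nil => left; simpa using one_mem H
    | @cons u v z hadj p ih =>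
      obtain ⟨s, hs, rfl⟩ := (hAdj _ _).1 hadj
      rcases ih with h1 | h2
      · right
        have heq : (α u * s0)⁻¹ * z = (s0⁻¹ * s) * ((α u * s)⁻¹ * z) := by group
        rw [heq]
        refine mul_mem ?_ h1
        have := hgen s hs s0 hs0
        rwa [mul_comm] at this
      · left
        have heq : α (α u * s) = u * α s := by rw [map_mul, hinv]
        rw [heq] at h2
        have heq2 : u⁻¹ * z = (α s * s0) * ((u * α s * s0)⁻¹ * z) := by group
        rw [heq2]
        exact mul_mem (hkey s hs s0 hs0) h2
  have L3 : ∀ x y : G, (x⁻¹ * y ∈ H ∨ (α x * s0)⁻¹ * y ∈ H) → Γ.Reachable x y := by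
    intro x y h
    rcases h with h | h
    · have := L1 _ h x
      simpa using this
    · have h0 : Γ.Adj x (α x * s0) := (hAdj _ _).2 ⟨s0, hs0, rfl⟩
      have hr := L1 _ h (α x * s0)
      have h1 : α x * s0 * ((α x * s0)⁻¹ * y) = y := by group
      rw [h1] at hr
      exact h0.reachable.trans hr
  have hconn : Γ.Connected ↔ ∀ y : G, y ∈ H ∨ s0⁻¹ * y ∈ H := by
    constructor
    · intro hc y
      have := L2 1 y (hc.preconnected 1 y).some
      simpa using this
    · intro h
      have key : ∀ z : G, Γ.Reachable 1 z := by
        intro z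
        apply L3
        simpa using h z
      have : Nonempty G := ⟨1⟩
      exact SimpleGraph.Connected.mk (fun x y => (key x).symm.trans (key y))
  have HleS : H ≤ Subgroup.closure S := by
    rw [hH]
    refine (Subgroup.closure_le _).2 ?_
    rintro u ⟨a, ha, b, hb, rfl⟩
    exact mul_mem (Subgroup.subset_closure ha) (inv_mem (Subgroup.subset_closure hb))
  have hSsubH : s0 ∈ H → ∀ s ∈ S, s ∈ H := by
    intro h0 s hs
    have heq : s = s * s0⁻¹ * s0 := by group
    rw [heq]
    exact mul_mem (hgen s hs s0 hs0) h0
  rw [hconn]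
  constructor
  · intro hcov
    constructor
    · rw [eq_top_iff]
      intro y _
      rcases hcov y with h | h
      · exact HleS h
      · have heq : y = s0 * (s0⁻¹ * y) := by group
        rw [heq]
        exact mul_mem (Subgroup.subset_closure hs0) (HleS h)
    · have hsurj : Function.Surjective (![(1 : G ⧸ H), ((s0 : G) : G ⧸ H)]) := by
        intro q
        obtain ⟨y, rfl⟩ := QuotientGroup.mk_surjective q
        rcases hcov y with h | h
        · refine ⟨0, ?_⟩
          simpa using ((QuotientGroup.eq_one_iff y).2 h).symm
        · refine ⟨1, ?_⟩
          simpa using QuotientGroup.eq.mpr h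
      calc H.index = Nat.card (G ⧸ H) := rfl
        _ ≤ Nat.card (Fin 2) := Nat.card_le_card_of_surjective _ hsurj
        _ = 2 := by simp
  · rintro ⟨htop, hidx⟩ y
    by_cases hy : y ∈ H
    · exact Or.inl hy
    by_cases hsy : s0⁻¹ * y ∈ H
    · exact Or.inr hsy
    exfalso
    have hs0H : s0 ∉ H := by
      intro h0
      have hle : Subgroup.closure S ≤ H := (Subgroup.closure_le _).2 (fun s hs => hSsubH h0 s hs)
      rw [htop] at hle
      exact hy (hle (Subgroup.mem_top y))
    have h01 : (1 : G ⧸ H) ≠ ((s0 : G) : G ⧸ H) := by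
      intro h
      exact hs0H ((QuotientGroup.eq_one_iff s0).1 h.symm)
    have h02 : (1 : G ⧸ H) ≠ ((y : G) : G ⧸ H) := by
      intro h
      exact hy ((QuotientGroup.eq_one_iff y).1 h.symm)
    have h12 : ((s0 : G) : G ⧸ H) ≠ ((y : G) : G ⧸ H) := by
      intro h
      exact hsy (QuotientGroup.eq.mp h)
    have hinj : Function.Injective (![(1 : G ⧸ H), ((s0 : G) : G ⧸ H), ((y : G) : G ⧸ H)]) := by
      intro i j hij
      fin_cases i <;> fin_cases j <;>
        simp_all [Matrix.cons_val_zero, Matrix.cons_val_one]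
    have h3 : 3 ≤ Nat.card (G ⧸ H) := by
      simpa using Nat.card_le_card_of_injective _ hinj
    have hidx' : Nat.card (G ⧸ H) = H.index := rfl
    omega
end

section
/- For every integer n ≥ 2, there exists a generalized Cayley graph of the dicyclic group T₄ₙ = ⟨a, b | a^{2n} = b⁴ = e, aⁿ = b², b⁻¹ab = a⁻¹⟩ with connection set of size 3 that is not connected. Specifically, with the involutory automorphism α: a ↦ a, b ↦ aⁿb, the set S = {b, a²b, a⁴b} is a generalized Cayley subset and GC(T₄ₙ, S, α) is disconnected. -/
/-!
The automorphism `α = twistEquiv n` fixes every `a i` and sends `xa i` to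
`a n * xa i = xa (i - n)`; since `(xa i)⁻¹ = xa (i + n)`, it satisfies `α (s⁻¹) = s` for every `s = xa i`, while `α (g⁻¹) * g`
always lies in `⟨a⟩`. An edge `{x, y}` of the generalized Cayley graph means
`α (x⁻¹) * y = xa j` with `j` even, and then the indices of `x` and `y` have the same parity.
So the parity of the index is constant on connected components, and `a 0`, `a 1` lie in
different ones.
-/

namespace SimpleGraph

variable {V β : Type*} {G : SimpleGraph V} {f : V → β}

theorem Reachable.eq_of_forall_adj (hf : ∀ x y, G.Adj x y → f x = f y) {u v : V}
    (h : G.Reachable u v) : f u = f v := by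
  obtain ⟨w⟩ := h
  induction w with
  | nil => rfl
  | cons hadj _ ih => exact (hf _ _ hadj).trans ih

theorem not_preconnected_of_forall_adj (hf : ∀ x y, G.Adj x y → f x = f y) {u v : V}
    (huv : f u ≠ f v) : ¬ G.Preconnected :=
  fun hG => huv ((hG u v).eq_of_forall_adj hf)

end SimpleGraph

namespace QuaternionGroup

variable {n : ℕ}

theorem inv_a (i : ZMod (2 * n)) : (a i)⁻¹ = a (-i) := rfl

theorem inv_xa (i : ZMod (2 * n)) : (xa i)⁻¹ = xa ((n : ZMod (2 * n)) + i) := rfl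

theorem natCast_add_natCast_self : (n : ZMod (2 * n)) + n = 0 := by
  have h : ((2 * n : ℕ) : ZMod (2 * n)) = 0 := ZMod.natCast_self _
  push_cast at h
  linear_combination h

def twist : QuaternionGroup n → QuaternionGroup n
  | a i => a i
  | xa i => xa (i - (n : ZMod (2 * n)))

theorem twist_involutive : Function.Involutive (twist (n := n)) := by
  rintro (i | i)
  · rfl
  · show xa (i - (n : ZMod (2 * n)) - (n : ZMod (2 * n))) = xa i
    congr 1
    linear_combination -natCast_add_natCast_self (n := n)

theorem twist_mul (g h : QuaternionGroup n) : twist (g * h) = twist g * twist h := by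
  rcases g with i | i <;> rcases h with j | j <;>
    simp only [twist, a_mul_a, a_mul_xa, xa_mul_a, xa_mul_xa] <;> congr 1 <;> ring

variable (n) in
def twistEquiv : QuaternionGroup n ≃* QuaternionGroup n :=
  MulEquiv.mk' twist_involutive.toPerm twist_mul

theorem twistEquiv_apply (g : QuaternionGroup n) : twistEquiv n g = twist g := rfl

theorem twistEquiv_inv_xa (i : ZMod (2 * n)) : twistEquiv n (xa i)⁻¹ = xa i := by
  rw [inv_xa, twistEquiv_apply, twist, add_sub_cancel_left]

theorem exists_twistEquiv_inv_mul_self_eq_a (g : QuaternionGroup n) :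
    ∃ i, twistEquiv n g⁻¹ * g = a i := by
  rcases g with i | i
  · exact ⟨_, a_mul_a _ _⟩
  · exact ⟨_, by rw [twistEquiv_inv_xa, xa_mul_xa]⟩

variable (n) in
def indexParity : ZMod (2 * n) →+* ZMod 2 :=
  ZMod.castHom (dvd_mul_right 2 n) _

variable (n) in
def parity : QuaternionGroup n → ZMod 2
  | a i => indexParity n i
  | xa i => indexParity n i

theorem parity_add_parity_of_twistEquiv_inv_mul_eq_xa {x y : QuaternionGroup n}
    {j : ZMod (2 * n)} (h : twistEquiv n x⁻¹ * y = xa j) :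
    parity n x + parity n y = indexParity n j := by
  rcases x with i | i <;> rcases y with k | k
  · rw [inv_a, twistEquiv_apply, twist, a_mul_a] at h
    cases h
  · rw [inv_a, twistEquiv_apply, twist, a_mul_xa, sub_neg_eq_add, xa.injEq] at h
    rw [← h, map_add, add_comm]
    rfl
  · rw [twistEquiv_inv_xa, xa_mul_a, xa.injEq] at h
    rw [← h, map_add]
    rfl
  · rw [twistEquiv_inv_xa, xa_mul_xa] at h
    cases h

end QuaternionGroup

open QuaternionGroup

theorem stmt_17_general (n : ℕ) :
    ∃ α : QuaternionGroup n ≃* QuaternionGroup n,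
      (∀ g, α (α g) = g) ∧
      (∀ i : ZMod (2 * n), α (QuaternionGroup.a i) = QuaternionGroup.a i) ∧
      (∀ i : ZMod (2 * n),
        α (QuaternionGroup.xa i) = QuaternionGroup.a (n : ZMod (2 * n)) * QuaternionGroup.xa i) ∧
      ∀ S : Set (QuaternionGroup n),
        S = {QuaternionGroup.xa 0, QuaternionGroup.a 2 * QuaternionGroup.xa 0,
              QuaternionGroup.a 4 * QuaternionGroup.xa 0} →
        ((∀ g, α g⁻¹ * g ∉ S) ∧ (fun s => α s⁻¹) '' S = S) ∧
        ∀ Γ : SimpleGraph (QuaternionGroup n),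
          (∀ x y, Γ.Adj x y ↔ α x⁻¹ * y ∈ S) → ¬ Γ.Connected := by
  refine ⟨twistEquiv n, twist_involutive, fun _ => rfl, fun i => (a_mul_xa _ _).symm, ?_⟩
  rintro S rfl
  simp only [a_mul_xa, zero_sub]
  have hS : ∀ s ∈ ({xa 0, xa (-2), xa (-4)} : Set (QuaternionGroup n)),
      ∃ j, s = xa j ∧ indexParity n j = 0 := by
    rintro s (rfl | rfl | rfl)
    · exact ⟨0, rfl, map_zero _⟩
    all_goals exact ⟨_, rfl, by simp only [map_neg, map_ofNat, neg_eq_zero]; decide⟩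
  refine ⟨⟨fun g hg => ?_, ?_⟩, fun Γ hΓ hconn => ?_⟩
  · obtain ⟨i, hi⟩ := exists_twistEquiv_inv_mul_self_eq_a g
    obtain ⟨j, hj, -⟩ := hS _ hg
    cases hi.symm.trans hj
  · refine Set.image_congr (fun s hs => ?_) |>.trans (Set.image_id _)
    obtain ⟨j, rfl, -⟩ := hS s hs
    exact twistEquiv_inv_xa j
  · refine SimpleGraph.not_preconnected_of_forall_adj (f := parity n) (u := a 0) (v := a 1)
      (fun x y hxy => ?_) ?_ hconn.preconnected
    obtain ⟨j, hj, hj0⟩ := hS _ ((hΓ x y).1 hxy)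
    rw [← CharTwo.add_eq_zero, parity_add_parity_of_twistEquiv_inv_mul_eq_xa hj, hj0]
    show indexParity n 0 ≠ indexParity n 1
    rw [map_zero, map_one]
    decide

theorem stmt_17 (n : ℕ) (hn : 2 ≤ n) :
    ∃ α : QuaternionGroup n ≃* QuaternionGroup n,
      (∀ g, α (α g) = g) ∧
      (∀ i : ZMod (2 * n), α (QuaternionGroup.a i) = QuaternionGroup.a i) ∧
      (∀ i : ZMod (2 * n),
        α (QuaternionGroup.xa i) = QuaternionGroup.a (n : ZMod (2 * n)) * QuaternionGroup.xa i) ∧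
      ∀ S : Set (QuaternionGroup n),
        S = {QuaternionGroup.xa 0, QuaternionGroup.a 2 * QuaternionGroup.xa 0,
              QuaternionGroup.a 4 * QuaternionGroup.xa 0} →
        ((∀ g, α g⁻¹ * g ∉ S) ∧ (fun s => α s⁻¹) '' S = S) ∧
        ∀ Γ : SimpleGraph (QuaternionGroup n),
          (∀ x y, Γ.Adj x y ↔ α x⁻¹ * y ∈ S) → ¬ Γ.Connected :=
  stmt_17_general n
end
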